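/- arXiv:2311.00657 — 14 statements merged into one kernel-verified Lean document; each statement's English description precedes it below -/
import Mathlib

section
/- Let n be a natural number, let I_0, …, I_{n−1} be O-submodules of K, and let Λ = {x ∈ K^n | x_i ∈ I_i for all i < n}. Then for every invertible upper-triangular n×n matrix a over K, the image of Λ under matrix-vector multiplication x ↦ a·x equals Λ if and only if a_{i,i}•I_i = I_i for all i < n and a_{i,j}•I_j ⊆ I_i for all i < j < n. -/
namespace ValPaper

variable {K : Type*} [Field K] {Γ : Type*} [AddCommGroup Γ] [LinearOrder Γ] [IsOrderedAddMonoid Γ]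

/-- The valuation ring `O = {x | v x ≥ 0}`. -/
def O (v : AddValuation K (WithTop Γ)) : Subring K where
  carrier := {x : K | 0 ≤ v x}
  mul_mem' {a b} ha hb := by
    simp only [Set.mem_setOf_eq, v.map_mul] at *
    exact add_nonneg ha hb
  one_mem' := by simp only [Set.mem_setOf_eq, v.map_one]; exact le_refl _
  add_mem' {a b} ha hb := le_trans (le_min ha hb) (v.map_add a b)
  zero_mem' := by simp only [Set.mem_setOf_eq, v.map_zero]; exact le_top
  neg_mem' {a} ha := by simpa only [Set.mem_setOf_eq, v.map_neg] using ha

lemma mem_O {v : AddValuation K (WithTop Γ)} {x : K} : x ∈ O v ↔ 0 ≤ v x := Iff.rfl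

/-- The maximal ideal `m = {x | v x > 0}`, as an `O`-submodule of `K`. -/
def mm (v : AddValuation K (WithTop Γ)) : Submodule ↥(O v) K where
  carrier := {x : K | 0 < v x}
  add_mem' {a b} ha hb := lt_of_lt_of_le (lt_min ha hb) (v.map_add a b)
  zero_mem' := by
    show (0 : WithTop Γ) < v 0
    rw [v.map_zero]
    exact WithTop.coe_lt_top 0
  smul_mem' c x hx := by
    have hc : (0 : WithTop Γ) ≤ v (c : K) := c.2
    show (0 : WithTop Γ) < v ((c : K) * x)
    rw [v.map_mul]
    exact lt_of_lt_of_le hx (le_add_of_nonneg_left hc)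

/-- The maximal ideal of `O`. -/
def mIdeal (v : AddValuation K (WithTop Γ)) : Ideal ↥(O v) where
  carrier := {x : ↥(O v) | 0 < v (x : K)}
  add_mem' {a b} ha hb := lt_of_lt_of_le (lt_min ha hb) (v.map_add _ _)
  zero_mem' := by
    show (0 : WithTop Γ) < v ((0 : ↥(O v)) : K)
    rw [ZeroMemClass.coe_zero, v.map_zero]
    exact WithTop.coe_lt_top 0
  smul_mem' c x hx := by
    show (0 : WithTop Γ) < v ((c * x : ↥(O v)) : K)
    push_cast
    rw [v.map_mul]
    exact lt_of_lt_of_le hx (le_add_of_nonneg_left c.2)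

/-- The colon module `(I : J) = {x ∈ K | x·J ⊆ I}`. -/
def colon (v : AddValuation K (WithTop Γ)) (I J : Submodule ↥(O v) K) : Submodule ↥(O v) K where
  carrier := {x : K | ∀ y ∈ J, x * y ∈ I}
  add_mem' {a b} ha hb := fun y hy => by
    rw [add_mul]; exact I.add_mem (ha y hy) (hb y hy)
  zero_mem' := fun y hy => by rw [zero_mul]; exact I.zero_mem
  smul_mem' c x hx := fun y hy => by
    rw [smul_mul_assoc]; exact I.smul_mem c (hx y hy)

/-- `O` as a submodule of `K` over itself. -/
def Omod (v : AddValuation K (WithTop Γ)) : Submodule ↥(O v) K where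
  carrier := {x : K | 0 ≤ v x}
  add_mem' {a b} ha hb := le_trans (le_min ha hb) (v.map_add a b)
  zero_mem' := by simp only [Set.mem_setOf_eq, v.map_zero]; exact le_top
  smul_mem' c x hx := by
    show (0 : WithTop Γ) ≤ v ((c : K) * x)
    rw [v.map_mul]
    exact add_nonneg c.2 hx


section Aux

variable (v : AddValuation K (WithTop Γ)) {n : ℕ}

/-- Aux: triangular matrix whose entries satisfy the colon conditions maps Λ into Λ. -/
lemma aux_mulVec_mem (I : Fin n → Submodule ↥(O v) K)
    (a : Matrix (Fin n) (Fin n) K) (htri : a.BlockTriangular id)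
    (h : ∀ i j : Fin n, i ≤ j → ∀ t ∈ I j, a i j * t ∈ I i)
    (x : Fin n → K) (hx : ∀ i, x i ∈ I i) (i : Fin n) :
    a.mulVec x i ∈ I i := by
  rw [Matrix.mulVec, dotProduct]
  refine Submodule.sum_mem _ fun j _ => ?_
  rcases le_or_gt i j with hij | hij
  · exact h i j hij _ (hx j)
  · rw [htri hij, zero_mul]; exact (I i).zero_mem

/-- Aux: diagonal entries of a triangular matrix are nonzero; inverse diag entry. -/
lemma aux_diag_ne_zero (a : Matrix (Fin n) (Fin n) K) (htri : a.BlockTriangular id)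
    (hunit : IsUnit a) (i : Fin n) : a i i ≠ 0 := by
  have hdet : IsUnit a.det := (Matrix.isUnit_iff_isUnit_det a).mp hunit
  rw [Matrix.det_of_upperTriangular htri] at hdet
  intro h
  apply hdet.ne_zero
  exact Finset.prod_eq_zero (Finset.mem_univ i) h

lemma aux_inv_diag (a : Matrix (Fin n) (Fin n) K) (htri : a.BlockTriangular id)
    (hunit : IsUnit a) (i : Fin n) : a⁻¹ i i = (a i i)⁻¹ := by
  have hdet : IsUnit a.det := (Matrix.isUnit_iff_isUnit_det a).mp hunit
  have := a.invertibleOfIsUnitDet hdet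
  have htri' : Matrix.BlockTriangular a⁻¹ id :=
    Matrix.blockTriangular_inv_of_blockTriangular htri
  have h1 : (a * a⁻¹) i i = 1 := by rw [Matrix.mul_nonsing_inv a hdet, Matrix.one_apply_eq]
  rw [Matrix.mul_apply] at h1
  rw [Finset.sum_eq_single i] at h1
  · exact eq_inv_of_mul_eq_one_left (by rw [mul_comm]; exact h1)
  · intro k _ hk
    rcases lt_or_gt_of_ne hk with hlt | hgt
    · rw [htri hlt, zero_mul]
    · rw [htri' hgt, mul_zero]
  · intro h; exact absurd (Finset.mem_univ i) h


/-- Aux: inverse of the diagonal entry stabilizes. -/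
lemma aux_inv_diag_mem (I : Fin n → Submodule ↥(O v) K)
    (a : Matrix (Fin n) (Fin n) K) (htri : a.BlockTriangular id) (hunit : IsUnit a)
    (hdiag : ∀ i : Fin n, (fun t => a i i * t) '' (I i : Set K) = (I i : Set K))
    (i : Fin n) {t : K} (ht : t ∈ I i) : (a i i)⁻¹ * t ∈ I i := by
  have : t ∈ (fun t => a i i * t) '' (I i : Set K) := (hdiag i).symm ▸ ht
  obtain ⟨s, hs, rfl⟩ := this
  rw [inv_mul_cancel_left₀ (aux_diag_ne_zero a htri hunit i)]
  exact hs

/-- Aux: the entries of the inverse satisfy the colon conditions. -/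
lemma aux_inv_cond (I : Fin n → Submodule ↥(O v) K)
    (a : Matrix (Fin n) (Fin n) K) (htri : a.BlockTriangular id) (hunit : IsUnit a)
    (hdiag : ∀ i : Fin n, (fun t => a i i * t) '' (I i : Set K) = (I i : Set K))
    (hoff : ∀ i j : Fin n, i < j → (fun t => a i j * t) '' (I j : Set K) ⊆ (I i : Set K)) :
    ∀ i j : Fin n, i ≤ j → ∀ t ∈ I j, a⁻¹ i j * t ∈ I i := by
  have hdet : IsUnit a.det := (Matrix.isUnit_iff_isUnit_det a).mp hunit
  have hinst := a.invertibleOfIsUnitDet hdet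
  have htri' : Matrix.BlockTriangular a⁻¹ id :=
    Matrix.blockTriangular_inv_of_blockTriangular htri
  have key : ∀ d : ℕ, ∀ i j : Fin n, i ≤ j → (j : ℕ) - (i : ℕ) ≤ d →
      ∀ t ∈ I j, a⁻¹ i j * t ∈ I i := by
    intro d
    induction d with
    | zero =>
      intro i j hij hd t ht
      have : i = j := le_antisymm hij (by rw [Fin.le_iff_val_le_val]; omega)
      subst this
      rw [aux_inv_diag a htri hunit i]
      exact aux_inv_diag_mem v I a htri hunit hdiag i ht
    | succ d ih =>
      intro i j hij hd t ht
      rcases eq_or_lt_of_le hij with heq | hlt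
      · subst heq
        rw [aux_inv_diag a htri hunit i]
        exact aux_inv_diag_mem v I a htri hunit hdiag i ht
      · -- main case: i < j
        have h0 : (a * a⁻¹) i j = 0 := by
          rw [Matrix.mul_nonsing_inv a hdet, Matrix.one_apply_ne hlt.ne]
        rw [Matrix.mul_apply] at h0
        have hsum : ∑ k : Fin n, a i k * a⁻¹ k j * t = 0 := by
          rw [← Finset.sum_mul, h0, zero_mul]
        have hsplit : a i i * a⁻¹ i j * t
            + ∑ k ∈ Finset.univ.erase i, a i k * a⁻¹ k j * t = 0 :=
          (Finset.add_sum_erase Finset.univ (fun k => a i k * a⁻¹ k j * t)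
            (Finset.mem_univ i)).trans hsum
        have hS : ∑ k ∈ Finset.univ.erase i, a i k * a⁻¹ k j * t ∈ I i := by
          refine Submodule.sum_mem _ fun k hk => ?_
          have hki : k ≠ i := Finset.ne_of_mem_erase hk
          rcases lt_or_gt_of_ne hki with hk1 | hk2
          · rw [htri hk1, zero_mul, zero_mul]; exact (I i).zero_mem
          · -- i < k
            rcases le_or_gt k j with hkj | hjk
            · have hmem : a⁻¹ k j * t ∈ I k := by
                refine ih k j hkj ?_ t ht
                have h2 : (i : ℕ) < (k : ℕ) := Fin.lt_iff_val_lt_val.mp hk2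
                have h3 : (k : ℕ) ≤ (j : ℕ) := Fin.le_iff_val_le_val.mp hkj
                omega
              rw [mul_assoc]
              exact hoff i k hk2 ⟨_, hmem, rfl⟩
            · rw [htri' hjk, mul_zero, zero_mul]; exact (I i).zero_mem
        have hmain : a i i * (a⁻¹ i j * t) ∈ I i := by
          have : a i i * (a⁻¹ i j * t)
              = -(∑ k ∈ Finset.univ.erase i, a i k * a⁻¹ k j * t) := by
            rw [← mul_assoc]; linear_combination hsplit
          rw [this]
          exact (I i).neg_mem hS
        have := aux_inv_diag_mem v I a htri hunit hdiag i hmain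
        rwa [inv_mul_cancel_left₀ (aux_diag_ne_zero a htri hunit i)] at this
  exact fun i j hij t ht => key ((j : ℕ) - i) i j hij le_rfl t ht

/-- Aux: conditions from image being contained in Λ. -/
lemma aux_cond_of_subset (I : Fin n → Submodule ↥(O v) K)
    (a : Matrix (Fin n) (Fin n) K)
    (h : (fun x => a.mulVec x) '' {x : Fin n → K | ∀ i, x i ∈ I i}
        ⊆ {x : Fin n → K | ∀ i, x i ∈ I i}) :
    ∀ i j : Fin n, ∀ t ∈ I j, a i j * t ∈ I i := by
  intro i j t ht
  have hx : (Pi.single j t : Fin n → K) ∈ {x : Fin n → K | ∀ i, x i ∈ I i} := by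
    intro k
    rcases eq_or_ne k j with rfl | hkj
    · rw [Pi.single_eq_same]; exact ht
    · rw [Pi.single_eq_of_ne hkj]; exact (I k).zero_mem
  have := h ⟨Pi.single j t, hx, rfl⟩ i
  simpa using this

end Aux

/-- an invertible upper-triangular matrix `a` stabilizes
`Λ = {x ∈ K^n | x_i ∈ I_i}` iff `a_{i,i}•I_i = I_i` for all `i` and
`a_{i,j}•I_j ⊆ I_i` for all `i < j`. -/
theorem stabilizer_description (v : AddValuation K (WithTop Γ))
    (hv : Function.Surjective v)
    (n : ℕ) (I : Fin n → Submodule ↥(O v) K)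
    (Λ : Set (Fin n → K)) (hΛ : Λ = {x : Fin n → K | ∀ i, x i ∈ I i})
    (a : Matrix (Fin n) (Fin n) K) (htri : a.BlockTriangular id) (hunit : IsUnit a) :
    (fun x => a.mulVec x) '' Λ = Λ ↔
      ((∀ i : Fin n, (fun t => a i i * t) '' (I i : Set K) = (I i : Set K)) ∧
        ∀ i j : Fin n, i < j → (fun t => a i j * t) '' (I j : Set K) ⊆ (I i : Set K)) := by
  subst hΛ
  have hdet : IsUnit a.det := (Matrix.isUnit_iff_isUnit_det a).mp hunit
  have hinst := a.invertibleOfIsUnitDet hdet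
  have htri' : Matrix.BlockTriangular a⁻¹ id :=
    Matrix.blockTriangular_inv_of_blockTriangular htri
  constructor
  · intro hEq
    have hc := aux_cond_of_subset v I a hEq.le
    have hEq' : (fun x => a⁻¹.mulVec x) '' {x : Fin n → K | ∀ i, x i ∈ I i}
        = {x : Fin n → K | ∀ i, x i ∈ I i} := by
      conv_lhs => rw [← hEq]
      rw [Set.image_image]
      simp only [Matrix.mulVec_mulVec, Matrix.nonsing_inv_mul a hdet, Matrix.one_mulVec]
      exact Set.image_id _
    have hc' := aux_cond_of_subset v I a⁻¹ hEq'.le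
    refine ⟨fun i => ?_, fun i j hij => ?_⟩
    · apply Set.Subset.antisymm
      · rintro _ ⟨t, ht, rfl⟩; exact hc i i t ht
      · intro t ht
        refine ⟨(a i i)⁻¹ * t, ?_, ?_⟩
        · have := hc' i i t ht
          rwa [aux_inv_diag a htri hunit i] at this
        · exact mul_inv_cancel_left₀ (aux_diag_ne_zero a htri hunit i) t
    · rintro _ ⟨t, ht, rfl⟩; exact hc i j t ht
  · rintro ⟨hdiag, hoff⟩
    have hcond : ∀ i j : Fin n, i ≤ j → ∀ t ∈ I j, a i j * t ∈ I i := by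
      intro i j hij t ht
      rcases eq_or_lt_of_le hij with rfl | h
      · have : a i i * t ∈ (fun t => a i i * t) '' (I i : Set K) := ⟨t, ht, rfl⟩
        rwa [hdiag i] at this
      · exact hoff i j h ⟨t, ht, rfl⟩
    have hcondInv := aux_inv_cond v I a htri hunit hdiag hoff
    apply Set.Subset.antisymm
    · rintro _ ⟨x, hx, rfl⟩
      exact fun i => aux_mulVec_mem v I a htri hcond x hx i
    · intro y hy
      refine ⟨a⁻¹.mulVec y, fun i => aux_mulVec_mem v I a⁻¹ htri' hcondInv y hy i, ?_⟩
      simp only [Matrix.mulVec_mulVec, Matrix.mul_nonsing_inv a hdet, Matrix.one_mulVec]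


end ValPaper
end

section
/- Let I and J be O-submodules of K such that (I : J) = m. Then there exists a ∈ K such that I = a•m and J = a•O. -/
namespace ValPaper

variable {K : Type*} [Field K] {Γ : Type*} [AddCommGroup Γ] [LinearOrder Γ] [IsOrderedAddMonoid Γ]

private lemma aux_lt {Γ : Type*} [AddCommGroup Γ] [LinearOrder Γ] [IsOrderedAddMonoid Γ] {g : Γ} {x : WithTop Γ}
    (h : (g : WithTop Γ) < x) : 0 < -(g : WithTop Γ) + x := by
  cases x with
  | top => simpa using lt_of_le_of_lt (le_of_eq rfl) (WithTop.coe_lt_top (-g))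
  | coe x =>
    rw [show -(g : WithTop Γ) = ((-g : Γ) : WithTop Γ) from rfl]
    norm_cast at h ⊢
    rwa [neg_add_eq_sub, sub_pos]

private lemma aux_le {Γ : Type*} [AddCommGroup Γ] [LinearOrder Γ] [IsOrderedAddMonoid Γ] {g : Γ} {x : WithTop Γ}
    (h : (g : WithTop Γ) ≤ x) : 0 ≤ -(g : WithTop Γ) + x := by
  cases x with
  | top => exact le_top
  | coe x =>
    rw [show -(g : WithTop Γ) = ((-g : Γ) : WithTop Γ) from rfl]
    norm_cast at h ⊢
    rwa [neg_add_eq_sub, sub_nonneg]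

/-- if `(I : J) = m` then `I = a•m` and `J = a•O` for some `a ∈ K`. -/
theorem colon_eq_maximalIdeal (v : AddValuation K (WithTop Γ))
    (hv : Function.Surjective v)
    (I J : Submodule ↥(O v) K) (h : colon v I J = mm v) :
    ∃ a : K, (I : Set K) = (fun t => a * t) '' (mm v : Set K) ∧
      (J : Set K) = (fun t => a * t) '' (Omod v : Set K) := by
  clear hv
  have hcol : ∀ x : K, (∀ y ∈ J, x * y ∈ I) ↔ 0 < v x := by
    intro x
    have : x ∈ colon v I J ↔ x ∈ mm v := by rw [h]
    exact this
  -- `1 ∉ (I : J)`, so there is `a ∈ J \ I`.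
  obtain ⟨a, haJ, haI⟩ : ∃ a ∈ J, a ∉ I := by
    by_contra hc
    push_neg at hc
    have h1 : (0 : WithTop Γ) < v 1 := (hcol 1).mp (fun y hy => by
      rw [one_mul]; exact hc y hy)
    rw [v.map_one] at h1
    exact lt_irrefl _ h1
  have ha0 : a ≠ 0 := fun e => haI (e ▸ I.zero_mem)
  obtain ⟨g, hg⟩ : ∃ g : Γ, v a = (g : WithTop Γ) :=
    WithTop.ne_top_iff_exists.mp (v.ne_top_iff.mpr ha0) |>.imp (fun _ e => e.symm)
  -- every nonzero element of `I` has value `> v a`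
  have hI_lt : ∀ x ∈ I, x ≠ 0 → v a < v x := by
    intro x hx hx0
    by_contra hle
    push_neg at hle
    apply haI
    have hax : a = (a * x⁻¹) * x := by field_simp
    have hO : (0 : WithTop Γ) ≤ v (a * x⁻¹) := by
      rw [v.map_mul, v.map_inv, add_comm]
      obtain ⟨gx, hgx⟩ : ∃ gx : Γ, v x = (gx : WithTop Γ) :=
        WithTop.ne_top_iff_exists.mp (v.ne_top_iff.mpr hx0) |>.imp (fun _ e => e.symm)
      rw [hgx]
      exact aux_le (hgx ▸ hle)
    have h2 : (a * x⁻¹) * x ∈ I := I.smul_mem (⟨a * x⁻¹, hO⟩ : ↥(O v)) hx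
    rw [← hax] at h2
    exact h2
  -- every element of `J` has value `≥ v a`
  have hJ_le : ∀ y ∈ J, v a ≤ v y := by
    intro y hy
    by_contra hlt
    push_neg at hlt
    have hy0 : y ≠ 0 := by
      intro e; rw [e, v.map_zero] at hlt; exact (not_le.mpr hlt) le_top
    obtain ⟨gy, hgy⟩ : ∃ gy : Γ, v y = (gy : WithTop Γ) :=
      WithTop.ne_top_iff_exists.mp (v.ne_top_iff.mpr hy0) |>.imp (fun _ e => e.symm)
    have hpos : (0 : WithTop Γ) < v (a * y⁻¹) := by
      rw [v.map_mul, v.map_inv, hgy, add_comm]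
      exact aux_lt (hgy ▸ hlt)
    have := (hcol (a * y⁻¹)).mpr hpos y hy
    have hay : a * y⁻¹ * y = a := by field_simp
    rw [hay] at this
    exact haI this
  refine ⟨a, ?_, ?_⟩
  · -- I = a • m
    ext x
    constructor
    · intro hx
      rcases eq_or_ne x 0 with rfl | hx0
      · exact ⟨0, (mm v).zero_mem, by simp⟩
      · refine ⟨a⁻¹ * x, ?_, by field_simp⟩
        show (0 : WithTop Γ) < v (a⁻¹ * x)
        rw [v.map_mul, v.map_inv, hg]
        exact aux_lt (hg ▸ hI_lt x hx hx0)
    · rintro ⟨t, ht, rfl⟩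
      have h1 : (0 : WithTop Γ) < v t := ht
      have := (hcol t).mpr h1 a haJ
      rwa [mul_comm] at this
  · -- J = a • O
    ext y
    constructor
    · intro hy
      refine ⟨a⁻¹ * y, ?_, by field_simp⟩
      show (0 : WithTop Γ) ≤ v (a⁻¹ * y)
      rw [v.map_mul, v.map_inv, hg]
      exact aux_le (hg ▸ hJ_le y hy)
    · rintro ⟨t, ht, rfl⟩
      have h1 : (0 : WithTop Γ) ≤ v t := ht
      have := J.smul_mem (⟨t, h1⟩ : ↥(O v)) haJ
      rwa [show (⟨t, h1⟩ : ↥(O v)) • a = a * t from mul_comm t a] at this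

end ValPaper
end

section
/- Let I be a nonzero O-submodule of K. Then m•I = I if and only if there is no a ∈ K with I = a•O, i.e. if and only if I is not a cyclic O-module. -/
namespace ValPaper

variable {K : Type*} [Field K] {Γ : Type*} [AddCommGroup Γ] [LinearOrder Γ] [IsOrderedAddMonoid Γ]

/-- for a nonzero `O`-submodule `I` of `K`, `m•I = I` iff `I` is not
cyclic, i.e. iff there is no `a ∈ K` with `I = a•O`. -/
theorem smul_maximalIdeal_eq_self_iff_not_cyclic (v : AddValuation K (WithTop Γ))
    (hv : Function.Surjective v)
    (I : Submodule ↥(O v) K) (hI : I ≠ ⊥) :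
    mIdeal v • I = I ↔ ¬ ∃ a : K, (I : Set K) = (fun t => a * t) '' (Omod v : Set K) := by
  constructor
  · rintro heq ⟨a, ha⟩
    have ha0 : a ≠ 0 := by
      rintro rfl
      apply hI
      ext x
      simp only [Submodule.mem_bot, ← SetLike.mem_coe, ha, Set.mem_image]
      constructor
      · rintro ⟨u, -, rfl⟩; exact zero_mul u
      · rintro rfl; exact ⟨0, (Omod v).zero_mem, zero_mul 0⟩
    have haI : a ∈ I := by
      rw [← SetLike.mem_coe, ha]
      exact ⟨1, by simp [Omod, mem_O], mul_one a⟩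
    -- the submodule {x | v a < v x}
    set P : Submodule ↥(O v) K :=
      { carrier := {x : K | v a < v x}
        add_mem' := fun {x y} hx hy => lt_of_lt_of_le (lt_min hx hy) (v.map_add x y)
        zero_mem' := by
          show v a < v (0 : K)
          rw [v.map_zero]
          exact lt_top_iff_ne_top.2 ((v.ne_top_iff).2 ha0)
        smul_mem' := fun c x hx => by
          show v a < v ((c : K) * x)
          rw [v.map_mul]
          exact lt_of_lt_of_le hx (le_add_of_nonneg_left c.2) } with hP
    have hsub : mIdeal v • I ≤ P := by
      rw [Submodule.smul_le]
      intro r hr n hn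
      show v a < v ((r : K) * n)
      rw [v.map_mul]
      have hn' : v a ≤ v n := by
        rw [← SetLike.mem_coe, ha] at hn
        obtain ⟨u, hu, rfl⟩ := hn
        rw [v.map_mul]
        exact le_add_of_nonneg_right hu
      have hr' : (0 : WithTop Γ) < v (r : K) := hr
      rcases eq_or_ne (v n) ⊤ with ht | ht
      · rw [ht, add_top]
        exact lt_top_iff_ne_top.2 (v.ne_top_iff.2 ha0)
      · calc v a ≤ v n := hn'
          _ = 0 + v n := (zero_add _).symm
          _ < v (r:K) + v n := WithTop.add_lt_add_right ht hr'
    have : v a < v a := hsub (by rw [heq]; exact haI)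
    exact lt_irrefl _ this
  · intro hnc
    by_contra hne
    have hle : mIdeal v • I ≤ I := by
      rw [Submodule.smul_le]
      intro r hr n hn
      exact I.smul_mem r hn
    obtain ⟨a, haI, hanot⟩ : ∃ a ∈ I, a ∉ mIdeal v • I := by
      by_contra h
      push_neg at h
      exact hne (le_antisymm hle h)
    have ha0 : a ≠ 0 := by rintro rfl; exact hanot (Submodule.zero_mem _)
    apply hnc
    refine ⟨a, ?_⟩
    ext x
    simp only [SetLike.mem_coe, Set.mem_image]
    constructor
    · intro hx
      rcases eq_or_ne x 0 with rfl | hx0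
      · exact ⟨0, (Omod v).zero_mem, mul_zero a⟩
      have hva : v a ≤ v x := by
        by_contra hlt
        push_neg at hlt
        -- a = (a/x) * x with v(a/x) > 0
        have hvax : (0 : WithTop Γ) < v (a * x⁻¹) := by
          rw [v.map_mul, v.map_inv]
          have hx_ne : v x ≠ ⊤ := v.ne_top_iff.2 hx0
          rw [← WithTop.add_lt_add_iff_right hx_ne, zero_add]
          have : v a + -v x + v x = v a := by
            rcases WithTop.ne_top_iff_exists.1 hx_ne with ⟨g, hg⟩
            rcases WithTop.ne_top_iff_exists.1 (v.ne_top_iff.2 ha0) with ⟨h, hh⟩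
            rw [← hg, ← hh, ← WithTop.LinearOrderedAddCommGroup.coe_neg, ← WithTop.coe_add, ← WithTop.coe_add]
            norm_cast
            abel
          rw [this]
          exact hlt
        have : a ∈ mIdeal v • I := by
          have hmem : (⟨a * x⁻¹, le_of_lt hvax⟩ : ↥(O v)) ∈ mIdeal v := hvax
          have h2 := Submodule.smul_mem_smul hmem hx
          have h3 : (⟨a * x⁻¹, le_of_lt hvax⟩ : ↥(O v)) • x = a := by
            show (a * x⁻¹) * x = a
            rw [mul_assoc, inv_mul_cancel₀ hx0, mul_one]
          rwa [h3] at h2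
        exact hanot this
      refine ⟨a⁻¹ * x, ?_, ?_⟩
      · show (0 : WithTop Γ) ≤ v (a⁻¹ * x)
        rw [v.map_mul, v.map_inv]
        have ha_ne : v a ≠ ⊤ := v.ne_top_iff.2 ha0
        rw [← WithTop.add_le_add_iff_right ha_ne, zero_add]
        have : -v a + v x + v a = v x := by
          rcases WithTop.ne_top_iff_exists.1 ha_ne with ⟨g, hg⟩
          rcases WithTop.ne_top_iff_exists.1 (v.ne_top_iff.2 hx0) with ⟨h, hh⟩
          rw [← hg, ← hh, ← WithTop.LinearOrderedAddCommGroup.coe_neg, ← WithTop.coe_add, ← WithTop.coe_add]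
          norm_cast
          abel
        rw [this]
        exact hva
      · rw [← mul_assoc, mul_inv_cancel₀ ha0, one_mul]
    · rintro ⟨u, hu, rfl⟩
      have h2 := I.smul_mem ⟨u, hu⟩ haI
      have h3 : (⟨u, hu⟩ : ↥(O v)) • a = a * u := mul_comm u a
      rwa [h3] at h2


end ValPaper
end

section
/- Let n be a natural number, let I_0, …, I_{n−1} be nonzero O-submodules of K, and let R = {x ∈ K^n | x_i ∈ I_i for all i < n}. Then the k-vector space R/mR is finite-dimensional, of dimension equal to the number of indices i < n for which I_i = a•O for some a ∈ K (i.e. for which I_i is a cyclic O-module). -/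
namespace ValPaper

variable {K : Type*} [Field K] {Γ : Type*} [AddCommGroup Γ] [LinearOrder Γ] [IsOrderedAddMonoid Γ]

section Aux

variable {K : Type*} [Field K] {Γ : Type*} [AddCommGroup Γ] [LinearOrder Γ] [IsOrderedAddMonoid Γ]

lemma v_eq_top_iff (v : AddValuation K (WithTop Γ)) {x : K} : v x = ⊤ ↔ x = 0 := by
  constructor
  · intro h
    by_contra hx
    have h1 : v (x * x⁻¹) = v x + v x⁻¹ := v.map_mul _ _
    rw [mul_inv_cancel₀ hx, v.map_one, h, top_add] at h1
    exact (WithTop.coe_ne_top (a := (0 : Γ))) h1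
  · intro h; rw [h, v.map_zero]

lemma v_pos_of_inv (v : AddValuation K (WithTop Γ)) {x y : K} (hx : x ≠ 0) (hy : y ≠ 0)
    (h : ¬ (0 ≤ v (y / x))) : 0 < v (x / y) := by
  have hsum : v (y / x) + v (x / y) = 0 := by
    rw [← v.map_mul, div_mul_div_comm, mul_comm, div_self (mul_ne_zero hx hy), v.map_one]
  by_contra hb
  push_neg at h hb
  have h2 : v (y / x) + v (x / y) ≤ v (y / x) + 0 := add_le_add_right hb _
  rw [hsum, add_zero] at h2
  exact absurd (lt_of_le_of_lt h2 h) (lt_irrefl _)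

lemma mIdeal_isMaximal (v : AddValuation K (WithTop Γ)) : (mIdeal v).IsMaximal := by
  rw [Ideal.isMaximal_iff]
  constructor
  · show ¬ (0 < v ((1 : ↥(O v)) : K))
    rw [OneMemClass.coe_one, v.map_one]
    exact lt_irrefl 0
  · intro J x _ hxm hxJ
    have hxnonneg : (0 : WithTop Γ) ≤ v (x : K) := x.2
    have h0 : v (x : K) = 0 := le_antisymm (not_lt.1 hxm) hxnonneg
    have hx0 : (x : K) ≠ 0 := by
      intro h
      rw [h, v.map_zero] at h0
      simp at h0
    have hinv : v ((x : K)⁻¹) = 0 := by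
      have h1 : v ((x : K) * (x : K)⁻¹) = v (x : K) + v ((x : K)⁻¹) := v.map_mul _ _
      rw [mul_inv_cancel₀ hx0, v.map_one, h0, zero_add] at h1
      exact h1.symm
    have hxinvO : (x : K)⁻¹ ∈ O v := le_of_eq hinv.symm
    have h1 : (⟨(x : K)⁻¹, hxinvO⟩ : ↥(O v)) * x = 1 := by
      ext
      simp [inv_mul_cancel₀ hx0]
    rw [← h1]
    exact J.mul_mem_left _ hxJ

end Aux

set_option maxHeartbeats 2000000
set_option synthInstance.maxHeartbeats 2000000

/-- for nonzero `O`-submodules `I_0, …, I_{n-1}` of `K` and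
`R = {x ∈ K^n | x_i ∈ I_i}`, the `k = O/m`-vector space `R/mR` is finite dimensional,
of dimension the number of indices `i` such that `I i` is cyclic. -/
theorem finrank_reduction_of_pi (v : AddValuation K (WithTop Γ))
    (hv : Function.Surjective v)
    (n : ℕ) (I : Fin n → Submodule ↥(O v) K) (hI : ∀ i, I i ≠ ⊥)
    (R : Submodule ↥(O v) (Fin n → K))
    (hR : (R : Set (Fin n → K)) = {x : Fin n → K | ∀ i, x i ∈ I i}) :
    Module.Finite (↥(O v) ⧸ mIdeal v) (↥R ⧸ (mIdeal v • (⊤ : Submodule ↥(O v) ↥R))) ∧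
    Module.finrank (↥(O v) ⧸ mIdeal v) (↥R ⧸ (mIdeal v • (⊤ : Submodule ↥(O v) ↥R)))
      = Nat.card {i : Fin n // ∃ a : K, (I i : Set K) = (fun t => a * t) '' (Omod v : Set K)} := by
  classical
  haveI hmax : (mIdeal v).IsMaximal := mIdeal_isMaximal v
  haveI : Nontrivial (↥(O v) ⧸ mIdeal v) := Ideal.Quotient.nontrivial_iff.mpr hmax.ne_top
  set k : Type _ := ↥(O v) ⧸ mIdeal v with hkdef
  set S := {i : Fin n // ∃ a : K, (I i : Set K) = (fun t => a * t) '' (Omod v : Set K)} with hSdef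
  haveI : Fintype S := Subtype.fintype _
  have hmemR : ∀ x : Fin n → K, x ∈ R ↔ ∀ i, x i ∈ I i := by
    intro x
    rw [← SetLike.mem_coe, hR]
    exact Iff.rfl
  have hach : ∀ i : S, ∃ a : K, (I i.1 : Set K) = (fun t => a * t) '' (Omod v : Set K) :=
    fun i => i.2
  choose a ha using hach
  have ha0 : ∀ i : S, a i ≠ 0 := by
    intro i h
    apply hI i.1
    rw [eq_bot_iff]
    intro y hy
    have hy' : y ∈ (fun t => a i * t) '' (Omod v : Set K) := by
      rw [← ha i]; exact hy
    obtain ⟨t, _, rfl⟩ := hy'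
    show a i * t ∈ (⊥ : Submodule ↥(O v) K)
    rw [h, zero_mul]
    exact Submodule.zero_mem ⊥
  have hmem : ∀ (i : S) (y : K), y ∈ I i.1 ↔ 0 ≤ v (y / a i) := by
    intro i y
    constructor
    · intro hy
      have hy' : y ∈ (fun t => a i * t) '' (Omod v : Set K) := by
        rw [← ha i]; exact hy
      obtain ⟨t, ht, rfl⟩ := hy'
      show (0 : WithTop Γ) ≤ v (a i * t / a i)
      rwa [mul_comm, mul_div_assoc, div_self (ha0 i), mul_one]
    · intro hy
      have hy' : y ∈ (fun t => a i * t) '' (Omod v : Set K) :=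
        ⟨y / a i, hy, by
          show a i * (y / a i) = y
          rw [← mul_div_assoc, mul_div_cancel_left₀ _ (ha0 i)]⟩
      rw [← SetLike.mem_coe, ha i]
      exact hy'
  have haI : ∀ i : S, a i ∈ I i.1 := fun i =>
    (hmem i _).2 (by rw [div_self (ha0 i), v.map_one])
  have hxia : ∀ (x : ↥R) (i : S), (x : Fin n → K) i.1 / a i ∈ O v := fun x i =>
    (hmem i _).1 ((hmemR _).1 x.2 i.1)
  -- the linear map φ
  set φ : ↥R →ₗ[↥(O v)] (S → k) :=
    { toFun := fun x i => Ideal.Quotient.mk (mIdeal v) ⟨(x : Fin n → K) i.1 / a i, hxia x i⟩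
      map_add' := by
        intro x y
        funext i
        show Ideal.Quotient.mk (mIdeal v) ⟨((x + y : ↥R) : Fin n → K) i.1 / a i, hxia _ i⟩
            = Ideal.Quotient.mk (mIdeal v) ⟨(x : Fin n → K) i.1 / a i, hxia x i⟩
              + Ideal.Quotient.mk (mIdeal v) ⟨(y : Fin n → K) i.1 / a i, hxia y i⟩
        rw [← map_add]
        congr 1
        ext
        show ((x + y : ↥R) : Fin n → K) i.1 / a i
            = (x : Fin n → K) i.1 / a i + (y : Fin n → K) i.1 / a i
        rw [Submodule.coe_add, Pi.add_apply, add_div]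
      map_smul' := by
        intro c x
        funext i
        show Ideal.Quotient.mk (mIdeal v) ⟨((c • x : ↥R) : Fin n → K) i.1 / a i, hxia _ i⟩
            = Ideal.Quotient.mk (mIdeal v) (c * ⟨(x : Fin n → K) i.1 / a i, hxia x i⟩)
        congr 1
        ext
        show (c : K) * (x : Fin n → K) i.1 / a i = (c : K) * ((x : Fin n → K) i.1 / a i)
        rw [mul_div_assoc] } with hφdef
  have hφ_apply : ∀ (x : ↥R) (i : S),
      φ x i = Ideal.Quotient.mk (mIdeal v) ⟨(x : Fin n → K) i.1 / a i, hxia x i⟩ :=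
    fun x i => rfl
  -- surjectivity of φ
  have hsurjφ : Function.Surjective φ := by
    intro f
    choose c hc using fun i : S => Ideal.Quotient.mk_surjective (f i)
    set w : Fin n → K := fun i =>
      if h : (∃ b : K, (I i : Set K) = (fun t => b * t) '' (Omod v : Set K)) then
        a ⟨i, h⟩ * (c ⟨i, h⟩ : K) else 0 with hwdef
    have hwR : w ∈ R := by
      rw [hmemR]
      intro i
      by_cases h : ∃ b : K, (I i : Set K) = (fun t => b * t) '' (Omod v : Set K)
      · have : w i = a ⟨i, h⟩ * (c ⟨i, h⟩ : K) := by rw [hwdef]; exact dif_pos h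
        rw [this]
        refine (hmem ⟨i, h⟩ _).2 ?_
        rw [mul_comm, mul_div_assoc, div_self (ha0 ⟨i, h⟩), mul_one]
        exact (c ⟨i, h⟩).2
      · have : w i = 0 := by rw [hwdef]; exact dif_neg h
        rw [this]
        exact Submodule.zero_mem _
    refine ⟨⟨w, hwR⟩, ?_⟩
    funext i
    have hwi : w i.1 = a i * (c i : K) := by
      rw [hwdef]
      exact dif_pos i.2
    have hsub : (⟨w i.1 / a i, hxia ⟨w, hwR⟩ i⟩ : ↥(O v)) = c i := by
      ext
      show w i.1 / a i = (c i : K)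
      rw [hwi, mul_div_cancel_left₀ _ (ha0 i)]
    rw [hφ_apply, hsub, hc i]
  -- the submodule `m • ⊤` contains the kernel of φ and conversely
  have hker1 : mIdeal v • (⊤ : Submodule ↥(O v) ↥R) ≤ LinearMap.ker φ := by
    refine Submodule.smul_le.2 ?_
    intro r hr x _
    rw [LinearMap.mem_ker, map_smul]
    funext i
    show r • Ideal.Quotient.mk (mIdeal v) (⟨(x : Fin n → K) i.1 / a i, hxia x i⟩ : ↥(O v)) = 0
    have hrs : r • Ideal.Quotient.mk (mIdeal v) (⟨(x : Fin n → K) i.1 / a i, hxia x i⟩ : ↥(O v))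
        = Ideal.Quotient.mk (mIdeal v) (r * ⟨(x : Fin n → K) i.1 / a i, hxia x i⟩) := rfl
    rw [hrs, Ideal.Quotient.eq_zero_iff_mem]
    show (0 : WithTop Γ) < v ((r : K) * ((x : Fin n → K) i.1 / a i))
    rw [v.map_mul]
    exact lt_of_lt_of_le hr (le_add_of_nonneg_right (hxia x i))
  have hsingle : ∀ (i : Fin n) (y : K), y ∈ I i → Pi.single i y ∈ R := by
    intro i y hy
    rw [hmemR]
    intro j
    rcases eq_or_ne j i with rfl | hne
    · rwa [Pi.single_eq_same]
    · rw [Pi.single_eq_of_ne hne]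
      exact Submodule.zero_mem _
  have hker2 : ∀ x : ↥R, φ x = 0 → x ∈ mIdeal v • (⊤ : Submodule ↥(O v) ↥R) := by
    intro x hx
    have hxR : ∀ i, (x : Fin n → K) i ∈ I i := (hmemR _).1 x.2
    set e : Fin n → ↥R := fun i => ⟨Pi.single i ((x : Fin n → K) i), hsingle i _ (hxR i)⟩
      with hedef
    have hxs : x = ∑ i : Fin n, e i := by
      apply Subtype.ext
      have h1 := map_sum R.subtype e Finset.univ
      simp only [Submodule.subtype_apply] at h1
      rw [h1]
      exact (Finset.univ_sum_single ((x : Fin n → K))).symm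
    rw [hxs]
    apply Submodule.sum_mem
    intro i _
    by_cases h0 : (x : Fin n → K) i = 0
    · have he0 : e i = 0 := by
        apply Subtype.ext
        show Pi.single i ((x : Fin n → K) i) = ((0 : ↥R) : Fin n → K)
        rw [h0, Pi.single_zero, ZeroMemClass.coe_zero]
      rw [he0]
      exact Submodule.zero_mem _
    by_cases hcy : ∃ b : K, (I i : Set K) = (fun t => b * t) '' (Omod v : Set K)
    · set i' : S := ⟨i, hcy⟩ with hi'def
      have hzero : Ideal.Quotient.mk (mIdeal v)
          (⟨(x : Fin n → K) i / a i', hxia x i'⟩ : ↥(O v)) = 0 := by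
        have := congrFun hx i'
        rwa [hφ_apply] at this
      have hval : (⟨(x : Fin n → K) i / a i', hxia x i'⟩ : ↥(O v)) ∈ mIdeal v :=
        Ideal.Quotient.eq_zero_iff_mem.1 hzero
      set z : ↥R := (⟨Pi.single i (a i'), hsingle i _ (haI i')⟩ : ↥R) with hzdef
      set t : ↥(O v) := (⟨(x : Fin n → K) i / a i', hxia x i'⟩ : ↥(O v)) with htdef
      have heq : e i = t • z := by
        apply Subtype.ext
        funext j
        show (Pi.single i ((x : Fin n → K) i) : Fin n → K) j = ((t • z : ↥R) : Fin n → K) j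
        have hco : ((t • z : ↥R) : Fin n → K) j
            = (t : K) * (Pi.single i (a i') : Fin n → K) j := rfl
        rw [hco]
        rcases eq_or_ne j i with rfl | hne
        · rw [Pi.single_eq_same, Pi.single_eq_same]
          show (x : Fin n → K) j = (x : Fin n → K) j / a i' * a i'
          rw [div_mul_cancel₀ _ (ha0 i')]
        · rw [Pi.single_eq_of_ne hne, Pi.single_eq_of_ne hne, mul_zero]
      rw [heq]
      exact Submodule.smul_mem_smul hval Submodule.mem_top
    · have hIx : ¬ (I i : Set K) ⊆ {y : K | 0 ≤ v (y / (x : Fin n → K) i)} := by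
        intro hsub
        apply hcy
        refine ⟨(x : Fin n → K) i, ?_⟩
        apply Set.Subset.antisymm
        · intro y hy
          exact ⟨y / (x : Fin n → K) i, hsub hy, by field_simp⟩
        · rintro y ⟨t, ht, rfl⟩
          show (x : Fin n → K) i * t ∈ I i
          have hsm := (I i).smul_mem (⟨t, ht⟩ : ↥(O v)) (hxR i)
          have h2 : (⟨t, ht⟩ : ↥(O v)) • ((x : Fin n → K) i) = (x : Fin n → K) i * t :=
            mul_comm t _
          rwa [h2] at hsm
      rw [Set.not_subset] at hIx
      obtain ⟨y, hyI, hyv⟩ := hIx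
      simp only [Set.mem_setOf_eq] at hyv
      have hy0 : y ≠ 0 := by
        rintro rfl
        apply hyv
        rw [zero_div, v.map_zero]
        exact le_top
      have hcpos : 0 < v ((x : Fin n → K) i / y) := v_pos_of_inv v h0 hy0 hyv
      set z : ↥R := (⟨Pi.single i y, hsingle i _ hyI⟩ : ↥R) with hzdef
      set t : ↥(O v) := (⟨(x : Fin n → K) i / y, le_of_lt hcpos⟩ : ↥(O v)) with htdef
      have heq : e i = t • z := by
        apply Subtype.ext
        funext j
        show (Pi.single i ((x : Fin n → K) i) : Fin n → K) j = ((t • z : ↥R) : Fin n → K) j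
        have hco : ((t • z : ↥R) : Fin n → K) j
            = (t : K) * (Pi.single i y : Fin n → K) j := rfl
        rw [hco]
        rcases eq_or_ne j i with rfl | hne
        · rw [Pi.single_eq_same, Pi.single_eq_same]
          show (x : Fin n → K) j = (x : Fin n → K) j / y * y
          rw [div_mul_cancel₀ _ hy0]
        · rw [Pi.single_eq_of_ne hne, Pi.single_eq_of_ne hne, mul_zero]
      rw [heq]
      exact Submodule.smul_mem_smul hcpos Submodule.mem_top
  have hker : LinearMap.ker φ = mIdeal v • (⊤ : Submodule ↥(O v) ↥R) :=
    le_antisymm (fun x hx => hker2 x (LinearMap.mem_ker.1 hx)) hker1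
  set ψ₀ := Submodule.liftQ (mIdeal v • (⊤ : Submodule ↥(O v) ↥R)) φ hker1 with hψ₀def
  have hinj : Function.Injective ψ₀ := by
    rw [← LinearMap.ker_eq_bot]
    exact Submodule.ker_liftQ_eq_bot _ _ _ (le_of_eq hker)
  have hsurj' : Function.Surjective ψ₀ := by
    intro y
    obtain ⟨x, hxy⟩ := hsurjφ y
    exact ⟨Submodule.Quotient.mk x, by rw [hψ₀def, Submodule.liftQ_apply]; exact hxy⟩
  set ψ : (↥R ⧸ (mIdeal v • (⊤ : Submodule ↥(O v) ↥R))) →ₗ[k] (S → k) :=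
    { toFun := ψ₀
      map_add' := ψ₀.map_add
      map_smul' := by
        intro cq xq
        obtain ⟨c, rfl⟩ := Ideal.Quotient.mk_surjective cq
        obtain ⟨x, rfl⟩ := Submodule.Quotient.mk_surjective _ xq
        show ψ₀ (Ideal.Quotient.mk (mIdeal v) c • Submodule.Quotient.mk x)
            = Ideal.Quotient.mk (mIdeal v) c • ψ₀ (Submodule.Quotient.mk x)
        rw [Module.Quotient.mk_smul_mk, hψ₀def, Submodule.liftQ_apply,
          Submodule.liftQ_apply, map_smul]
        funext i
        have hq : ∀ q : k, c • q = Ideal.Quotient.mk (mIdeal v) c • q := fun q =>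
          Quot.inductionOn q (fun d => rfl)
        exact hq (φ x i) } with hψdef
  have hbij : Function.Bijective ψ := ⟨hinj, hsurj'⟩
  let eq : (↥R ⧸ (mIdeal v • (⊤ : Submodule ↥(O v) ↥R))) ≃ₗ[k] (S → k) :=
    LinearEquiv.ofBijective ψ hbij
  constructor
  · exact Module.Finite.equiv eq.symm
  · rw [eq.finrank_eq, Module.finrank_pi, Nat.card_eq_fintype_card]


end ValPaper
end

section
/- Assume Γ is densely ordered. Then for every O-submodule I of K, (O : I) ≠ m. -/
namespace ValPaper

variable {K : Type*} [Field K] {Γ : Type*} [AddCommGroup Γ] [LinearOrder Γ] [IsOrderedAddMonoid Γ]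

/-- if `Γ` is densely ordered, then `(O : I) ≠ m` for every
`O`-submodule `I` of `K`. -/
theorem colon_O_ne_maximalIdeal (v : AddValuation K (WithTop Γ))
    (hv : Function.Surjective v) [DenselyOrdered Γ]
    (I : Submodule ↥(O v) K) :
    colon v (Omod v) I ≠ mm v := by
  intro h
  by_cases hI : ∀ y ∈ I, (0 : WithTop Γ) ≤ v y
  · have h1 : (1 : K) ∈ colon v (Omod v) I := by
      intro y hy
      show (0 : WithTop Γ) ≤ v (1 * y)
      rw [one_mul]; exact hI y hy
    rw [h] at h1
    have h2 : (0 : WithTop Γ) < v 1 := h1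
    rw [v.map_one] at h2
    exact lt_irrefl _ h2
  · push_neg at hI
    obtain ⟨y, hyI, hy⟩ := hI
    have hy0 : v y < 0 := hy
    obtain ⟨γ', hγ'⟩ := WithTop.ne_top_iff_exists.mp (ne_top_of_lt hy0)
    have hγ'lt : γ' < 0 := by
      rw [← hγ'] at hy0
      exact_mod_cast hy0
    obtain ⟨ε, hε0, hε⟩ := exists_between (neg_pos.mpr hγ'lt)
    obtain ⟨x, hx⟩ := hv (ε : WithTop Γ)
    have hxm : x ∈ mm v := by
      show (0 : WithTop Γ) < v x
      rw [hx]; exact_mod_cast hε0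
    rw [← h] at hxm
    have h2 : (0 : WithTop Γ) ≤ v (x * y) := hxm y hyI
    rw [v.map_mul, hx, ← hγ', ← WithTop.coe_add] at h2
    have h3 : (0 : Γ) ≤ ε + γ' := by exact_mod_cast h2
    have h4 : ε + γ' < 0 := by
      have := add_lt_add_of_lt_of_le hε (le_refl γ')
      rwa [neg_add_cancel] at this
    exact absurd h3 (not_le.mpr h4)

end ValPaper
end

section
/- Let n be a natural number, let I_0, …, I_{n−1} be nonzero O-submodules of K, and let R = {x ∈ K^n | x_i ∈ I_i for all i < n}. Then the map from the product ∏_{i<n} (O : I_i) to Hom_O(R, O) sending a tuple b to the homomorphism x ↦ Σ_{i<n} b_i·x_i is an isomorphism of O-modules. -/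
set_option synthInstance.maxHeartbeats 1000000
set_option maxHeartbeats 1000000


namespace ValPaper

variable {K : Type*} [Field K] {Γ : Type*} [AddCommGroup Γ] [LinearOrder Γ] [IsOrderedAddMonoid Γ]

lemma smul_eq_mul' {v : AddValuation K (WithTop Γ)} (c : ↥(O v)) (x : K) :
    c • x = (c : K) * x := rfl

lemma key (v : AddValuation K (WithTop Γ)) (I : Submodule ↥(O v) K) (hI : I ≠ ⊥)
    (f : ↥I →ₗ[↥(O v)] ↥(O v)) :
    ∃ b ∈ colon v (Omod v) I, ∀ z : ↥I, ((f z : K)) = b * (z : K) := by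
  obtain ⟨y, hyI, hy0⟩ := Submodule.exists_mem_ne_zero_of_ne_bot hI
  set Y : ↥I := ⟨y, hyI⟩
  have hmain : ∀ z : ↥I, ((f z : K)) * y = ((f Y : K)) * (z : K) := by
    intro z
    rcases eq_or_ne (z : K) 0 with hz | hz
    · have : z = 0 := Subtype.ext hz
      rw [this, map_zero]; simp [hz]
    · rcases le_total (v y) (v (z : K)) with h | h
      · have hc : (z : K) * y⁻¹ ∈ O v := by
          rw [mem_O, v.map_mul, v.map_inv]
          have h0 : v y + -(v y) ≤ v (z : K) + -(v y) := add_le_add_left h _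
          have hvy : v y + -(v y) = 0 := by
            have := v.map_mul y y⁻¹
            rw [mul_inv_cancel₀ hy0, v.map_one, v.map_inv] at this
            exact this.symm
          rw [hvy] at h0; exact h0
        set c : ↥(O v) := ⟨(z : K) * y⁻¹, hc⟩
        have hzc : z = c • Y := by
          apply Subtype.ext
          show (z : K) = (c : K) * y
          exact (inv_mul_cancel_right₀ hy0 _).symm
        rw [hzc, map_smul]
        show ((c : K) * (f Y : K)) * y = (f Y : K) * ((c : K) * y)
        ring
      · have hc : y * (z : K)⁻¹ ∈ O v := by
          rw [mem_O, v.map_mul, v.map_inv]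
          have h0 : v (z : K) + -(v (z : K)) ≤ v y + -(v (z : K)) := add_le_add_left h _
          have hvz : v (z : K) + -(v (z : K)) = 0 := by
            have := v.map_mul (z : K) (z : K)⁻¹
            rw [mul_inv_cancel₀ hz, v.map_one, v.map_inv] at this
            exact this.symm
          rw [hvz] at h0; exact h0
        set c : ↥(O v) := ⟨y * (z : K)⁻¹, hc⟩
        have hyc : Y = c • z := by
          apply Subtype.ext
          show y = (c : K) * (z : K)
          exact (inv_mul_cancel_right₀ hz _).symm
        rw [hyc, map_smul]
        show (f z : K) * y = ((c : K) * (f z : K)) * (z : K)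
        have : (c : K) * (z : K) = y := by exact inv_mul_cancel_right₀ hz _
        rw [mul_comm ((c:K)) ((f z : K)), mul_assoc, this]
  refine ⟨(f Y : K) * y⁻¹, ?_, ?_⟩
  · intro w hw
    have := hmain ⟨w, hw⟩
    have hw' : (f Y : K) * y⁻¹ * w = (f ⟨w, hw⟩ : K) := by
      field_simp at this ⊢
      linear_combination -this
    show 0 ≤ v ((f Y : K) * y⁻¹ * w)
    rw [hw']
    exact (f ⟨w, hw⟩).2
  · intro z
    have := hmain z
    field_simp
    linear_combination this


lemma coe_smul_O {v : AddValuation K (WithTop Γ)} (c a : ↥(O v)) :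
    ((c • a : ↥(O v)) : K) = (c : K) * (a : K) := rfl

lemma mem_of_mem_R {v : AddValuation K (WithTop Γ)} {n : ℕ}
    {I : Fin n → Submodule ↥(O v) K} {R : Submodule ↥(O v) (Fin n → K)}
    (hR : (R : Set (Fin n → K)) = {x : Fin n → K | ∀ i, x i ∈ I i}) (x : ↥R) (i : Fin n) :
    (x : Fin n → K) i ∈ I i := by
  have hx := x.2; rw [← SetLike.mem_coe, hR] at hx; exact hx i

def sumHom (v : AddValuation K (WithTop Γ)) {n : ℕ}
    {I : Fin n → Submodule ↥(O v) K} {R : Submodule ↥(O v) (Fin n → K)}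
    (hR : (R : Set (Fin n → K)) = {x : Fin n → K | ∀ i, x i ∈ I i})
    (b : ∀ i, ↥(colon v (Omod v) (I i))) : ↥R →ₗ[↥(O v)] ↥(O v) where
  toFun x := ⟨∑ i, (b i : K) * (x : Fin n → K) i,
    Subring.sum_mem _ fun i _ => (b i).2 _ (mem_of_mem_R hR x i)⟩
  map_add' x y := Subtype.ext <| by
    push_cast
    simp [mul_add, Finset.sum_add_distrib]
  map_smul' c x := Subtype.ext <| by
    simp only [RingHom.id_apply, coe_smul_O, Submodule.coe_smul, Pi.smul_apply,
      smul_eq_mul' c, Finset.mul_sum]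
    exact Finset.sum_congr rfl fun i _ => by ring

lemma sumHom_apply (v : AddValuation K (WithTop Γ)) {n : ℕ}
    {I : Fin n → Submodule ↥(O v) K} {R : Submodule ↥(O v) (Fin n → K)}
    (hR : (R : Set (Fin n → K)) = {x : Fin n → K | ∀ i, x i ∈ I i})
    (b : ∀ i, ↥(colon v (Omod v) (I i))) (x : ↥R) :
    ((sumHom v hR b x : ↥(O v)) : K) = ∑ i, (b i : K) * (x : Fin n → K) i := rfl

def Fmap (v : AddValuation K (WithTop Γ)) {n : ℕ}
    {I : Fin n → Submodule ↥(O v) K} {R : Submodule ↥(O v) (Fin n → K)}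
    (hR : (R : Set (Fin n → K)) = {x : Fin n → K | ∀ i, x i ∈ I i}) :
    (∀ i, ↥(colon v (Omod v) (I i))) →ₗ[↥(O v)] (↥R →ₗ[↥(O v)] ↥(O v)) where
  toFun := sumHom v hR
  map_add' b1 b2 := LinearMap.ext fun x => Subtype.ext <| by
    simp only [sumHom_apply, LinearMap.add_apply, AddMemClass.coe_add, Pi.add_apply,
      Submodule.coe_add, add_mul, Finset.sum_add_distrib]
  map_smul' c b := LinearMap.ext fun x => Subtype.ext <| by
    simp only [sumHom_apply, RingHom.id_apply, LinearMap.smul_apply, coe_smul_O,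
      Pi.smul_apply, Finset.mul_sum]
    refine Finset.sum_congr rfl fun i _ => ?_
    show ((c : K) * (b i : K)) * _ = _
    ring

lemma single_mem_R {v : AddValuation K (WithTop Γ)} {n : ℕ}
    {I : Fin n → Submodule ↥(O v) K} {R : Submodule ↥(O v) (Fin n → K)}
    (hR : (R : Set (Fin n → K)) = {x : Fin n → K | ∀ i, x i ∈ I i})
    (i : Fin n) {y : K} (hy : y ∈ I i) : Pi.single i y ∈ R := by
  rw [← SetLike.mem_coe, hR]
  intro j
  rcases eq_or_ne j i with h | h
  · subst h; simpa using hy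
  · simp [Pi.single_apply, h, Submodule.zero_mem]

def singleMap (v : AddValuation K (WithTop Γ)) {n : ℕ}
    {I : Fin n → Submodule ↥(O v) K} {R : Submodule ↥(O v) (Fin n → K)}
    (hR : (R : Set (Fin n → K)) = {x : Fin n → K | ∀ i, x i ∈ I i})
    (i : Fin n) : ↥(I i) →ₗ[↥(O v)] ↥R :=
  LinearMap.codRestrict R
    ((LinearMap.single ↥(O v) (fun _ : Fin n => K) i).comp (I i).subtype)
    (fun y => single_mem_R hR i y.2)

lemma singleMap_coe (v : AddValuation K (WithTop Γ)) {n : ℕ}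
    {I : Fin n → Submodule ↥(O v) K} {R : Submodule ↥(O v) (Fin n → K)}
    (hR : (R : Set (Fin n → K)) = {x : Fin n → K | ∀ i, x i ∈ I i})
    (i : Fin n) (y : ↥(I i)) :
    ((singleMap v hR i y : ↥R) : Fin n → K) = Pi.single i (y : K) := rfl

/-- for nonzero `O`-submodules `I_0, …, I_{n-1}` of `K` and
`R = {x ∈ K^n | x_i ∈ I_i}`, the map `b ↦ (x ↦ Σ_i b_i·x_i)` is an isomorphism
of `O`-modules from `∏_i (O : I_i)` onto `Hom_O(R, O)`. -/
theorem pi_colon_equiv_hom (v : AddValuation K (WithTop Γ))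
    (hv : Function.Surjective v)
    (n : ℕ) (I : Fin n → Submodule ↥(O v) K) (hI : ∀ i, I i ≠ ⊥)
    (R : Submodule ↥(O v) (Fin n → K))
    (hR : (R : Set (Fin n → K)) = {x : Fin n → K | ∀ i, x i ∈ I i}) :
    ∃ e : (∀ i, ↥(colon v (Omod v) (I i))) ≃ₗ[↥(O v)] (↥R →ₗ[↥(O v)] ↥(O v)),
      ∀ (b : ∀ i, ↥(colon v (Omod v) (I i))) (x : ↥R),
        ((e b x : ↥(O v)) : K) = ∑ i : Fin n, (b i : K) * (x : Fin n → K) i := by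
  have hinj : Function.Injective (Fmap v hR) := by
    intro b1 b2 h
    funext i
    obtain ⟨y, hy, hy0⟩ := Submodule.exists_mem_ne_zero_of_ne_bot (hI i)
    have h2 := congrArg (fun g : ↥R →ₗ[↥(O v)] ↥(O v) =>
      ((g ⟨Pi.single i y, single_mem_R hR i hy⟩ : ↥(O v)) : K)) h
    simp only [Fmap, LinearMap.coe_mk, AddHom.coe_mk, sumHom_apply] at h2
    have hs : ∀ b : ∀ i, ↥(colon v (Omod v) (I i)),
        (∑ j, (b j : K) * ((⟨Pi.single i y, single_mem_R hR i hy⟩ : ↥R) : Fin n → K) j)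
        = (b i : K) * y := by
      intro b
      rw [Finset.sum_eq_single i]
      · simp
      · intro j _ hj
        simp [Pi.single_apply, hj]
      · simp
    rw [hs b1, hs b2] at h2
    exact Subtype.ext (mul_right_cancel₀ hy0 h2)
  have hsurj : Function.Surjective (Fmap v hR) := by
    intro φ
    choose b hbmem hbspec using fun i => key v (I i) (hI i) (φ.comp (singleMap v hR i))
    refine ⟨fun i => ⟨b i, hbmem i⟩, ?_⟩
    apply LinearMap.ext
    intro x
    apply Subtype.ext
    show ((sumHom v hR _ x : ↥(O v)) : K) = ((φ x : ↥(O v)) : K)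
    rw [sumHom_apply]
    have hxdec : x = ∑ i, singleMap v hR i ⟨(x : Fin n → K) i, mem_of_mem_R hR x i⟩ := by
      apply Subtype.ext
      rw [Submodule.coe_sum]
      have : ∀ i : Fin n, ((singleMap v hR i ⟨(x : Fin n → K) i, mem_of_mem_R hR x i⟩ : ↥R)
          : Fin n → K) = Pi.single i ((x : Fin n → K) i) := fun i => rfl
      simp only [this]
      exact (Finset.univ_sum_single (x : Fin n → K)).symm
    conv_rhs => rw [hxdec]
    rw [map_sum, AddSubmonoidClass.coe_finset_sum]
    refine Finset.sum_congr rfl fun i _ => ?_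
    have h3 := hbspec i ⟨(x : Fin n → K) i, mem_of_mem_R hR x i⟩
    rw [LinearMap.comp_apply] at h3
    exact h3.symm
  exact ⟨LinearEquiv.ofBijective (Fmap v hR) ⟨hinj, hsurj⟩, fun b x => rfl⟩


end ValPaper
end

section
/- Assume Γ is densely ordered and let I be an O-submodule of K. Then either (I : m) = I, or there exists a ∈ K with I = a•m and (I : m) = a•O. In either case I ⊆ (I : m) and m•(I : m) = m•I. -/
namespace ValPaper

variable {K : Type*} [Field K] {Γ : Type*} [AddCommGroup Γ] [LinearOrder Γ] [IsOrderedAddMonoid Γ]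

lemma v_ne_top (v : AddValuation K (WithTop Γ)) {x : K} (hx : x ≠ 0) : v x ≠ ⊤ := by
  intro h
  have h1 : v x + v x⁻¹ = 0 := by rw [← v.map_mul, mul_inv_cancel₀ hx, v.map_one]
  rw [h, top_add] at h1
  simp at h1

lemma v_mul_inv_nonneg (v : AddValuation K (WithTop Γ)) {x y : K} (hx : x ≠ 0)
    (h : v x ≤ v y) : 0 ≤ v (y * x⁻¹) := by
  by_contra h'
  push_neg at h'
  have : v (y * x⁻¹) + v x < 0 + v x :=
    WithTop.add_lt_add_right (v_ne_top v hx) h'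
  rw [← v.map_mul, inv_mul_cancel_right₀ hx, zero_add] at this
  exact absurd h (not_le_of_gt this)

lemma v_mul_inv_pos (v : AddValuation K (WithTop Γ)) {x y : K} (hx : x ≠ 0)
    (h : v x < v y) : 0 < v (y * x⁻¹) := by
  by_contra h'
  push_neg at h'
  have : v (y * x⁻¹) + v x ≤ 0 + v x := add_le_add_left h' _
  rw [← v.map_mul, inv_mul_cancel_right₀ hx, zero_add] at this
  exact absurd h (not_lt_of_ge this)

lemma smul_coe (v : AddValuation K (WithTop Γ)) (c : ↥(O v)) (x : K) :
    c • x = (c : K) * x := rfl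

lemma mem_of_v_le (v : AddValuation K (WithTop Γ)) (I : Submodule ↥(O v) K) {x y : K}
    (hx : x ∈ I) (hx0 : x ≠ 0) (h : v x ≤ v y) : y ∈ I := by
  have hc : (0 : WithTop Γ) ≤ v (y * x⁻¹) := v_mul_inv_nonneg v hx0 h
  have := I.smul_mem ⟨y * x⁻¹, hc⟩ hx
  rwa [smul_coe, inv_mul_cancel_right₀ hx0] at this

/-- Every nonzero-valued positive element splits: an element of `m` is a product of
an element of `m` (with prescribed smaller value) and another element of `m`. -/
lemma exists_split (v : AddValuation K (WithTop Γ)) (hv : Function.Surjective v)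
    [DenselyOrdered Γ] {r : K} (hr0 : r ≠ 0) (hr : 0 < v r) :
    ∃ z w : K, z ≠ 0 ∧ 0 < v z ∧ 0 < v w ∧ r = z * w := by
  obtain ⟨γ, hγ⟩ : ∃ γ : Γ, v r = (γ : WithTop Γ) := by
    cases hvr : v r with
    | top => exact absurd hvr (v_ne_top v hr0)
    | coe γ => exact ⟨γ, rfl⟩
  have hγpos : (0 : Γ) < γ := by
    have := hr; rw [hγ] at this; exact_mod_cast this
  obtain ⟨β, hβ0, hβγ⟩ := exists_between hγpos
  obtain ⟨z, hz⟩ := hv (β : WithTop Γ)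
  have hz0 : z ≠ 0 := by
    intro h; rw [h, v.map_zero] at hz; exact (WithTop.coe_ne_top hz.symm).elim
  have hzpos : 0 < v z := by rw [hz]; exact_mod_cast hβ0
  have hzr : v z < v r := by rw [hz, hγ]; exact_mod_cast hβγ
  refine ⟨z, r * z⁻¹, hz0, hzpos, v_mul_inv_pos v hz0 hzr, ?_⟩
  field_simp

/-- if `Γ` is densely ordered, then for every `O`-submodule `I` of `K`,
either `(I : m) = I`, or `I = a•m` and `(I : m) = a•O` for some `a ∈ K`; in either
case `I ⊆ (I : m)` and `m•(I : m) = m•I`. -/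
theorem colon_maximalIdeal (v : AddValuation K (WithTop Γ))
    (hv : Function.Surjective v) [DenselyOrdered Γ]
    (I : Submodule ↥(O v) K) :
    (colon v I (mm v) = I ∨
      ∃ a : K, (I : Set K) = (fun t => a * t) '' (mm v : Set K) ∧
        (colon v I (mm v) : Set K) = (fun t => a * t) '' (Omod v : Set K)) ∧
    I ≤ colon v I (mm v) ∧
    mIdeal v • colon v I (mm v) = mIdeal v • I := by
  classical
  -- I ≤ colon
  have hIle : I ≤ colon v I (mm v) := by
    intro x hx y hy
    have : (0 : WithTop Γ) ≤ v y := le_of_lt hy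
    have := I.smul_mem ⟨y, this⟩ hx
    rwa [smul_coe, mul_comm] at this
  -- m • colon = m • I
  have hsmul : mIdeal v • colon v I (mm v) = mIdeal v • I := by
    apply le_antisymm
    · rw [Submodule.smul_le]
      intro r hr x hx
      by_cases hr0 : (r : K) = 0
      · have : r • x = 0 := by rw [smul_coe, hr0, zero_mul]
        rw [this]; exact Submodule.zero_mem _
      · obtain ⟨z, w, hz0, hzpos, hwpos, hzw⟩ := exists_split v hv hr0 hr
        have hz1 : (0 : WithTop Γ) ≤ v z := le_of_lt hzpos
        have hwx : w * x ∈ I := by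
          have := hx w hwpos
          rwa [mul_comm] at this
        have hmem : (⟨z, hz1⟩ : ↥(O v)) ∈ mIdeal v := hzpos
        have := Submodule.smul_mem_smul hmem hwx
        have heq : (⟨z, hz1⟩ : ↥(O v)) • (w * x) = r • x := by
          rw [smul_coe, smul_coe, ← mul_assoc, ← hzw]
        rwa [heq] at this
    · exact smul_mono_right _ hIle
  refine ⟨?_, hIle, hsmul⟩
  by_cases hcol : colon v I (mm v) = I
  · exact Or.inl hcol
  · right
    have : ∃ a, a ∈ colon v I (mm v) ∧ a ∉ I := by
      by_contra h
      push_neg at h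
      exact hcol (le_antisymm h hIle)
    obtain ⟨a, haC, haI⟩ := this
    have ha0 : a ≠ 0 := fun h => haI (h ▸ I.zero_mem)
    refine ⟨a, ?_, ?_⟩
    · ext x
      constructor
      · intro hx
        by_cases hx0 : x = 0
        · exact ⟨0, (mm v).zero_mem, by simp [hx0]⟩
        · have hax : v a < v x := by
            by_contra h
            push_neg at h
            exact haI (mem_of_v_le v I hx hx0 h)
          refine ⟨x * a⁻¹, v_mul_inv_pos v ha0 hax, ?_⟩
          field_simp
        
      · rintro ⟨t, ht, rfl⟩
        exact haC t ht
    · ext x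
      constructor
      · intro hx
        by_cases hx0 : x = 0
        · exact ⟨0, (Omod v).zero_mem, by simp [hx0]⟩
        · have hax : v a ≤ v x := by
            by_contra h
            push_neg at h
            -- v x < v a; find y ∈ m with v (x*y) still < v a
            obtain ⟨γ, hγ⟩ : ∃ γ : Γ, v x = (γ : WithTop Γ) := by
              cases hvx : v x with
              | top => exact absurd hvx (v_ne_top v hx0)
              | coe γ => exact ⟨γ, rfl⟩
            obtain ⟨δ, hδ⟩ : ∃ δ : Γ, v a = (δ : WithTop Γ) := by
              cases hva : v a with
              | top => exact absurd hva (v_ne_top v ha0)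
              | coe δ => exact ⟨δ, rfl⟩
            have hγδ : γ < δ := by
              have := h; rw [hγ, hδ] at this; exact_mod_cast this
            obtain ⟨β, hβ1, hβ2⟩ := exists_between hγδ
            obtain ⟨y, hy⟩ := hv ((β - γ : Γ) : WithTop Γ)
            have hym : y ∈ mm v := by
              show (0 : WithTop Γ) < v y
              rw [hy]
              exact_mod_cast sub_pos.mpr hβ1
            have hxyI : x * y ∈ I := hx y hym
            have hxy0 : x * y ≠ 0 := by
              intro hh
              have : v (x * y) = ⊤ := by rw [hh, v.map_zero]
              rw [v.map_mul, hγ, hy] at this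
              exact (WithTop.coe_ne_top (by exact_mod_cast this)).elim
            have hlt : v (x * y) ≤ v a := by
              rw [v.map_mul, hγ, hy, hδ, ← WithTop.coe_add]
              exact_mod_cast le_of_lt (by rwa [add_sub_cancel])
            exact haI (mem_of_v_le v I hxyI hxy0 hlt)
          refine ⟨x * a⁻¹, v_mul_inv_nonneg v ha0 hax, ?_⟩
          field_simp
      · rintro ⟨t, ht, rfl⟩
        intro y hy
        have hty : t * y ∈ mm v := by
          show (0 : WithTop Γ) < v (t * y)
          rw [v.map_mul]
          exact lt_of_lt_of_le hy (le_add_of_nonneg_left ht)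
        have := haC (t * y) hty
        rwa [mul_assoc]

end ValPaper
end

section
/- Assume Γ is densely ordered. Let A be an invertible upper-triangular n×n matrix over K with columns a_0, …, a_{n−1}, let I_0, …, I_{n−1} be O-submodules of K, and let R = Σ_{i<n} I_i•a_i ⊆ K^n (the set of vectors Σ_i t_i·a_i with t_i ∈ I_i). Set R̄ = {x ∈ K^n | t·x ∈ R for all t ∈ m}. Then: (1) R̄ = Σ_{i<n} (I_i : m)•a_i; (2) R ⊆ R̄; (3) m•R̄ = m•R; (4) no (I_i : m) is of the form a•m with a ∈ K nonzero; and (5) the inclusion R ⊆ R̄ induces an injective k-linear map R/mR → R̄/mR̄. -/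
namespace ValPaper

variable {K : Type*} [Field K] {Γ : Type*} [AddCommGroup Γ] [LinearOrder Γ] [IsOrderedAddMonoid Γ]

/-- `R̄ = {x ∈ K^n | t·x ∈ R for all t ∈ m}`. -/
def colonVec (v : AddValuation K (WithTop Γ)) {n : ℕ}
    (R : Submodule ↥(O v) (Fin n → K)) : Submodule ↥(O v) (Fin n → K) where
  carrier := {x : Fin n → K | ∀ t : K, 0 < v t → t • x ∈ R}
  add_mem' {x y} hx hy := fun t ht => by rw [smul_add]; exact R.add_mem (hx t ht) (hy t ht)
  zero_mem' := fun t ht => by rw [smul_zero]; exact R.zero_mem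
  smul_mem' c x hx := fun t ht => by
    rw [smul_comm]
    exact R.smul_mem c (hx t ht)

lemma aux_v_ne_top {v : AddValuation K (WithTop Γ)} {x : K} (hx : x ≠ 0) : v x ≠ ⊤ := by
  intro h
  have h1 : v x + v x⁻¹ = 0 := by rw [← v.map_mul, mul_inv_cancel₀ hx, v.map_one]
  rw [h, top_add] at h1
  simp at h1

/-- Factor an element of positive valuation as a product of two such. -/
lemma aux_factor (v : AddValuation K (WithTop Γ)) (hv : Function.Surjective v)
    [DenselyOrdered Γ] {t : K} (ht : 0 < v t) :
    ∃ s₁ s₂ : K, 0 < v s₁ ∧ 0 < v s₂ ∧ t = s₁ * s₂ := by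
  rcases eq_or_ne t 0 with rfl | ht0
  · refine ⟨0, 0, ?_, ?_, (zero_mul 0).symm⟩ <;>
      (rw [v.map_zero]; exact WithTop.coe_lt_top 0)
  · obtain ⟨γ, hγ⟩ := WithTop.ne_top_iff_exists.mp (aux_v_ne_top (v := v) ht0)
    have hγpos : (0 : Γ) < γ := by
      have : (0 : WithTop Γ) < (γ : WithTop Γ) := hγ ▸ ht
      exact_mod_cast this
    obtain ⟨δ, hδ0, hδγ⟩ := exists_between hγpos
    obtain ⟨s, hs⟩ := hv (δ : WithTop Γ)
    have hs0 : s ≠ 0 := by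
      intro h; rw [h, v.map_zero] at hs; exact (WithTop.coe_ne_top hs.symm)
    set u := s⁻¹ * t with hu
    have hsu : s * u = t := by rw [hu, ← mul_assoc, mul_inv_cancel₀ hs0, one_mul]
    have hvu : (δ : WithTop Γ) + v u = (γ : WithTop Γ) := by
      rw [← hs, ← v.map_mul, hsu, ← hγ]
    have hune : v u ≠ ⊤ := by intro h; rw [h] at hvu; simp at hvu
    obtain ⟨ε, hε⟩ := WithTop.ne_top_iff_exists.mp hune
    have hde : δ + ε = γ := by rw [← hε] at hvu; exact_mod_cast hvu
    have hεpos : (0 : Γ) < ε := by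
      by_contra h
      push_neg at h
      have : δ + ε ≤ δ + 0 := add_le_add_right h δ
      rw [hde, add_zero] at this
      exact absurd (lt_of_lt_of_le hδγ this) (lt_irrefl δ)
    refine ⟨s, u, ?_, ?_, hsu.symm⟩
    · rw [hs]; exact_mod_cast hδ0
    · rw [← hε]; exact_mod_cast hεpos

/-- Representation of a vector in terms of the columns of an invertible matrix. -/
lemma aux_rep (v : AddValuation K (WithTop Γ)) {n : ℕ} (A B : Matrix (Fin n) (Fin n) K)
    (hAB : A * B = 1) (hBA : B * A = 1)
    (J : Fin n → Submodule ↥(O v) K) (x : Fin n → K) :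
    (∃ t : Fin n → K, (∀ i, t i ∈ J i) ∧ x = ∑ i : Fin n, t i • (fun j => A j i)) ↔
      ∀ i, (B.mulVec x) i ∈ J i := by
  have hsum : ∀ t : Fin n → K, (∑ i : Fin n, t i • (fun j => A j i)) = A.mulVec t := by
    intro t; funext j
    simp [Matrix.mulVec, dotProduct, Finset.sum_apply, mul_comm]
  constructor
  · rintro ⟨t, htJ, rfl⟩ i
    rw [hsum, Matrix.mulVec_mulVec, hBA, Matrix.one_mulVec]
    exact htJ i
  · intro h
    exact ⟨B.mulVec x, h, by rw [hsum, Matrix.mulVec_mulVec, hAB, Matrix.one_mulVec]⟩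

set_option maxHeartbeats 1000000 in
set_option synthInstance.maxHeartbeats 400000 in
/-- properties of the `m`-avoiding hull `R̄` of `R = Σ_i I_i•a_i`,
where the `a_i` are the columns of an invertible upper-triangular matrix `A`. -/
theorem m_avoiding_hull (v : AddValuation K (WithTop Γ))
    (hv : Function.Surjective v) [DenselyOrdered Γ]
    (n : ℕ) (A : Matrix (Fin n) (Fin n) K) (htri : A.BlockTriangular id) (hA : IsUnit A)
    (I : Fin n → Submodule ↥(O v) K)
    (R : Submodule ↥(O v) (Fin n → K))
    (hR : (R : Set (Fin n → K)) =
      {x : Fin n → K | ∃ t : Fin n → K, (∀ i, t i ∈ I i) ∧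
        x = ∑ i : Fin n, t i • (fun j => A j i)}) :
    ((colonVec v R : Set (Fin n → K)) =
      {x : Fin n → K | ∃ t : Fin n → K, (∀ i, t i ∈ colon v (I i) (mm v)) ∧
        x = ∑ i : Fin n, t i • (fun j => A j i)}) ∧
    R ≤ colonVec v R ∧
    mIdeal v • colonVec v R = mIdeal v • R ∧
    (∀ i : Fin n, ¬ ∃ a : K, a ≠ 0 ∧
        (colon v (I i) (mm v) : Set K) = (fun t => a * t) '' (mm v : Set K)) ∧
    ∀ hle : R ≤ colonVec v R,
      ∃ f : (↥R ⧸ (mIdeal v • (⊤ : Submodule ↥(O v) ↥R))) →ₗ[↥(O v) ⧸ mIdeal v]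
            (↥(colonVec v R) ⧸ (mIdeal v • (⊤ : Submodule ↥(O v) ↥(colonVec v R)))),
        Function.Injective f ∧
        ∀ x : ↥R, f (Submodule.Quotient.mk x)
          = Submodule.Quotient.mk (Submodule.inclusion hle x) := by
  classical
  -- Set up the inverse matrix
  obtain ⟨U, hU⟩ := hA
  set B : Matrix (Fin n) (Fin n) K := ↑(U⁻¹) with hB
  have hAB : A * B = 1 := by rw [← hU]; exact U.mul_inv
  have hBA : B * A = 1 := by rw [← hU]; exact U.inv_mul
  -- Membership characterizations
  have hmemR : ∀ x : Fin n → K, x ∈ R ↔ ∀ i, (B.mulVec x) i ∈ I i := by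
    intro x
    have h0 : x ∈ R ↔ x ∈ (R : Set (Fin n → K)) := Iff.rfl
    rw [h0, hR]
    exact aux_rep v A B hAB hBA I x
  have hmembar : ∀ x : Fin n → K,
      x ∈ colonVec v R ↔ ∀ i, (B.mulVec x) i ∈ colon v (I i) (mm v) := by
    intro x
    constructor
    · intro hx i s hs
      have h1 := (hmemR _).mp (hx s hs) i
      rwa [Matrix.mulVec_smul, Pi.smul_apply, smul_eq_mul, mul_comm] at h1
    · intro h s hs
      rw [hmemR]
      intro i
      rw [Matrix.mulVec_smul, Pi.smul_apply, smul_eq_mul, mul_comm]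
      exact h i s hs
  -- Part 2
  have part2 : R ≤ colonVec v R := by
    intro x hx t ht
    exact R.smul_mem ⟨t, le_of_lt ht⟩ hx
  -- Part 3
  have part3 : mIdeal v • colonVec v R = mIdeal v • R := by
    refine le_antisymm (Submodule.smul_le.mpr fun c hc x hx => ?_)
      (smul_mono_right _ part2)
    obtain ⟨s₁, s₂, hs₁, hs₂, hfac⟩ := aux_factor v hv (show (0:WithTop Γ) < v (c : K) from hc)
    have h1 : c • x = (⟨s₁, le_of_lt hs₁⟩ : ↥(O v)) • (s₂ • x) := by
      funext j
      show (c : K) * x j = s₁ * (s₂ * x j)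
      rw [← mul_assoc, ← hfac]
    rw [h1]
    exact Submodule.smul_mem_smul hs₁ (hx s₂ hs₂)
  refine ⟨?_, part2, part3, ?_, ?_⟩
  -- Part 1
  · ext x
    exact Iff.trans (hmembar x)
      (aux_rep v A B hAB hBA (fun i => colon v (I i) (mm v)) x).symm
  -- Part 4
  · rintro i ⟨a, ha, hset⟩
    have hmem : a ∈ colon v (I i) (mm v) := by
      intro y hy
      obtain ⟨s₁, s₂, hs₁, hs₂, rfl⟩ := aux_factor v hv (hy : 0 < v y)
      have h1 : a * s₁ ∈ colon v (I i) (mm v) := by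
        have h2 : a * s₁ ∈ (fun t => a * t) '' (mm v : Set K) := ⟨s₁, hs₁, rfl⟩
        rw [← hset] at h2
        exact h2
      have h3 := h1 s₂ hs₂
      rwa [mul_assoc] at h3
    have hmem' : a ∈ (fun t => a * t) '' (mm v : Set K) := by
      rw [← hset]; exact hmem
    obtain ⟨t, htm, hat⟩ := hmem'
    have hat' : a * t = a := hat
    have ht1 : t = 1 := by
      apply mul_left_cancel₀ ha
      rw [hat', mul_one]
    rw [ht1] at htm
    have : (0 : WithTop Γ) < v 1 := htm
    rw [v.map_one] at this
    exact lt_irrefl _ this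
  -- Part 5
  · intro hle
    have hcomap : mIdeal v • (⊤ : Submodule ↥(O v) ↥R) ≤
        Submodule.comap (Submodule.inclusion hle)
          (mIdeal v • (⊤ : Submodule ↥(O v) ↥(colonVec v R))) := by
      intro x hx
      rw [Submodule.mem_comap, Submodule.mem_smul_top_iff, part3]
      rw [Submodule.mem_smul_top_iff] at hx
      exact hx
    set f₀ := Submodule.mapQ (mIdeal v • (⊤ : Submodule ↥(O v) ↥R))
      (mIdeal v • (⊤ : Submodule ↥(O v) ↥(colonVec v R)))
      (Submodule.inclusion hle) hcomap with hf₀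
    refine ⟨{ toFun := f₀, map_add' := f₀.map_add, map_smul' := ?_ }, ?_, ?_⟩
    · intro c x
      obtain ⟨r, rfl⟩ := Ideal.Quotient.mk_surjective c
      obtain ⟨y, rfl⟩ := Submodule.Quotient.mk_surjective _ x
      show f₀ ((Ideal.Quotient.mk (mIdeal v)) r • Submodule.Quotient.mk y)
        = (Ideal.Quotient.mk (mIdeal v)) r • f₀ (Submodule.Quotient.mk y)
      rw [Module.Quotient.mk_smul_mk, hf₀, Submodule.mapQ_apply,
        Submodule.mapQ_apply, Module.Quotient.mk_smul_mk, map_smul]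
    · intro x y hxy
      obtain ⟨a, rfl⟩ := Submodule.Quotient.mk_surjective _ x
      obtain ⟨b, rfl⟩ := Submodule.Quotient.mk_surjective _ y
      change f₀ (Submodule.Quotient.mk a) = f₀ (Submodule.Quotient.mk b) at hxy
      rw [hf₀, Submodule.mapQ_apply, Submodule.mapQ_apply, Submodule.Quotient.eq] at hxy
      rw [Submodule.Quotient.eq, Submodule.mem_smul_top_iff]
      rw [Submodule.mem_smul_top_iff, part3] at hxy
      simpa using hxy
    · intro x
      show f₀ (Submodule.Quotient.mk x) = Submodule.Quotient.mk (Submodule.inclusion hle x)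
      exact Submodule.mapQ_apply _ _ _ _

end ValPaper
end

section
/- Let n be a natural number, let I_0, …, I_{n−1} be O-submodules of K, let Λ = {x ∈ K^n | x_i ∈ I_i for all i < n}, and let F = {a ∈ B_n(K) | a·Λ = Λ} be the stabilizer of Λ in B_n(K). Then F is the internal semidirect product of F ∩ U_n(K) by F ∩ D_n(K): F ∩ U_n(K) is a normal subgroup of F, (F ∩ U_n(K)) ∩ (F ∩ D_n(K)) = {1}, and every a ∈ F factors as a = u·d with u ∈ F ∩ U_n(K) and d ∈ F ∩ D_n(K). -/
namespace ValPaper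

variable {K : Type*} [Field K] {Γ : Type*} [AddCommGroup Γ] [LinearOrder Γ] [IsOrderedAddMonoid Γ]

private lemma diag_mul_tri {K : Type*} [Field K] {n : ℕ} {A B : Matrix (Fin n) (Fin n) K}
    (hA : A.BlockTriangular id) (hB : B.BlockTriangular id) (i : Fin n) :
    (A * B) i i = A i i * B i i := by
  rw [Matrix.mul_apply]
  refine Finset.sum_eq_single i (fun j _ hj => ?_) (by simp)
  rcases lt_or_gt_of_ne hj with h | h
  · rw [hA h, zero_mul]
  · rw [hB h, mul_zero]

/-- the stabilizer `F` of `Λ` in `B_n(K)` is the internal semidirect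
product of `F ∩ U_n(K)` by `F ∩ D_n(K)`. -/
theorem stabilizer_semidirect_product (v : AddValuation K (WithTop Γ))
    (hv : Function.Surjective v)
    (n : ℕ) (I : Fin n → Submodule ↥(O v) K)
    (Λ : Set (Fin n → K)) (hΛ : Λ = {x : Fin n → K | ∀ i, x i ∈ I i})
    (F U D : Set (Matrix (Fin n) (Fin n) K))
    (hF : F = {a : Matrix (Fin n) (Fin n) K |
      a.BlockTriangular id ∧ IsUnit a ∧ (fun x => a.mulVec x) '' Λ = Λ})
    (hU : U = {a : Matrix (Fin n) (Fin n) K | a.BlockTriangular id ∧ ∀ i, a i i = 1})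
    (hD : D = {a : Matrix (Fin n) (Fin n) K | IsUnit a ∧ ∀ i j, i ≠ j → a i j = 0}) :
    (∀ a ∈ F, ∀ u ∈ F ∩ U, a * u * a⁻¹ ∈ F ∩ U) ∧
    (F ∩ U) ∩ (F ∩ D) = {1} ∧
    (∀ a ∈ F, ∃ u ∈ F ∩ U, ∃ d ∈ F ∩ D, a = u * d) := by
  subst hF hU hD
  clear hv
  -- closure of the image condition under multiplication
  have hmulVec_im : ∀ a b : Matrix (Fin n) (Fin n) K,
      (fun x => a.mulVec x) '' Λ = Λ → (fun x => b.mulVec x) '' Λ = Λ →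
      (fun x => (a * b).mulVec x) '' Λ = Λ := by
    intro a b ha hb
    have h : (fun x => (a * b).mulVec x) '' Λ
        = (fun x => a.mulVec x) '' ((fun x => b.mulVec x) '' Λ) := by
      rw [Set.image_image]
      simp [Matrix.mulVec_mulVec]
    rw [h, hb, ha]
  -- inverses
  have hinv : ∀ a : Matrix (Fin n) (Fin n) K,
      a.BlockTriangular id → IsUnit a → (fun x => a.mulVec x) '' Λ = Λ →
      a⁻¹.BlockTriangular id ∧ IsUnit a⁻¹ ∧ (fun x => a⁻¹.mulVec x) '' Λ = Λ ∧
        a * a⁻¹ = 1 ∧ a⁻¹ * a = 1 := by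
    intro a htri hu him
    have hdet := (Matrix.isUnit_iff_isUnit_det a).mp hu
    have h1 : a * a⁻¹ = 1 := Matrix.mul_nonsing_inv a hdet
    have h2 : a⁻¹ * a = 1 := Matrix.nonsing_inv_mul a hdet
    obtain ⟨inst⟩ := hu.nonempty_invertible
    have htri' : a⁻¹.BlockTriangular id := Matrix.blockTriangular_inv_of_blockTriangular htri
    have hu' : IsUnit a⁻¹ := Matrix.isUnit_nonsing_inv_iff.mpr hu
    refine ⟨htri', hu', ?_, h1, h2⟩
    calc (fun x => a⁻¹.mulVec x) '' Λ
        = (fun x => a⁻¹.mulVec x) '' ((fun x => a.mulVec x) '' Λ) := by rw [him]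
      _ = (fun x => a⁻¹.mulVec (a.mulVec x)) '' Λ := Set.image_image _ _ _
      _ = Λ := by simp [Matrix.mulVec_mulVec, h2, Matrix.one_mulVec]
  -- diagonal entries act on the I i
  have hstab : ∀ b : Matrix (Fin n) (Fin n) K, (fun x => b.mulVec x) '' Λ = Λ →
      ∀ i, ∀ y ∈ I i, b i i * y ∈ I i := by
    intro b hb i y hy
    have hx : Pi.single i y ∈ Λ := by
      rw [hΛ]
      intro j
      rcases eq_or_ne j i with rfl | hne
      · simpa using hy
      · simp [Pi.single_eq_of_ne hne]
    have hmem : b.mulVec (Pi.single i y) ∈ Λ := by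
      rw [← hb]; exact ⟨_, hx, rfl⟩
    rw [hΛ] at hmem
    simpa [Matrix.mulVec_single] using hmem i
  -- diagonal matrices preserving Λ
  have hdiagF : ∀ c : Fin n → K, (∀ i, c i ≠ 0) →
      (∀ i, ∀ y ∈ I i, c i * y ∈ I i) → (∀ i, ∀ y ∈ I i, (c i)⁻¹ * y ∈ I i) →
      (Matrix.diagonal c).BlockTriangular id ∧ IsUnit (Matrix.diagonal c) ∧
        (fun x => (Matrix.diagonal c).mulVec x) '' Λ = Λ := by
    intro c hc h1 h2
    refine ⟨Matrix.blockTriangular_diagonal c, ?_, ?_⟩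
    · rw [Matrix.isUnit_iff_isUnit_det, Matrix.det_diagonal]
      exact isUnit_iff_ne_zero.mpr (Finset.prod_ne_zero_iff.mpr fun i _ => hc i)
    · apply Set.Subset.antisymm
      · rintro _ ⟨x, hx, rfl⟩
        rw [hΛ] at hx ⊢
        intro i
        simpa [Matrix.mulVec_diagonal] using h1 i (x i) (hx i)
      · intro y hy
        rw [hΛ] at hy
        refine ⟨fun i => (c i)⁻¹ * y i, ?_, ?_⟩
        · rw [hΛ]; intro i; exact h2 i (y i) (hy i)
        · funext i
          simp [Matrix.mulVec_diagonal, mul_inv_cancel_left₀ (hc i)]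
  refine ⟨?_, ?_, ?_⟩
  · -- conjugation
    rintro a ⟨haT, haU, haI⟩ u ⟨⟨huT', huU', huI'⟩, huT, hud⟩
    obtain ⟨hiT, hiU, hiI, hmul1, hmul2⟩ := hinv a haT haU haI
    constructor
    · exact ⟨(haT.mul huT').mul hiT, (haU.mul huU').mul hiU,
        hmulVec_im _ _ (hmulVec_im _ _ haI huI') hiI⟩
    · refine ⟨(haT.mul huT').mul hiT, fun i => ?_⟩
      rw [diag_mul_tri (haT.mul huT') hiT, diag_mul_tri haT huT', hud i, mul_one,
        ← diag_mul_tri haT hiT, hmul1]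
      exact Matrix.one_apply_eq i
  · -- trivial intersection
    ext a
    simp only [Set.mem_inter_iff, Set.mem_singleton_iff, Set.mem_setOf_eq]
    constructor
    · rintro ⟨⟨-, -, hd⟩, ⟨-, -, hoff⟩⟩
      ext i j
      rcases eq_or_ne i j with rfl | hne
      · rw [hd i, Matrix.one_apply_eq]
      · rw [hoff i j hne, Matrix.one_apply_ne hne]
    · rintro rfl
      have h1F : (1 : Matrix (Fin n) (Fin n) K).BlockTriangular id ∧
          IsUnit (1 : Matrix (Fin n) (Fin n) K) ∧
          (fun x => (1 : Matrix (Fin n) (Fin n) K).mulVec x) '' Λ = Λ :=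
        ⟨Matrix.blockTriangular_one, isUnit_one, by simp [Matrix.one_mulVec]⟩
      exact ⟨⟨h1F, Matrix.blockTriangular_one, fun i => Matrix.one_apply_eq i⟩,
        h1F, isUnit_one, fun i j hne => Matrix.one_apply_ne hne⟩
  · -- decomposition
    rintro a ⟨haT, haU, haI⟩
    obtain ⟨hiT, hiU, hiI, hmul1, hmul2⟩ := hinv a haT haU haI
    have hdi : ∀ i, a i i * a⁻¹ i i = 1 := by
      intro i
      rw [← diag_mul_tri haT hiT, hmul1]
      exact Matrix.one_apply_eq i
    have hne : ∀ i, a i i ≠ 0 := fun i => left_ne_zero_of_mul_eq_one (hdi i)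
    have hinv_eq : ∀ i, a⁻¹ i i = (a i i)⁻¹ := fun i =>
      (inv_eq_of_mul_eq_one_right (hdi i)).symm
    have hcinv : ∀ i, ∀ y ∈ I i, (a i i)⁻¹ * y ∈ I i := by
      intro i y hy
      have h := hstab a⁻¹ hiI i y hy
      rwa [hinv_eq i] at h
    obtain ⟨hdT, hdU, hdI⟩ := hdiagF (fun i => a i i) hne (hstab a haI) hcinv
    obtain ⟨heT, heU, heI⟩ := hdiagF (fun i => (a i i)⁻¹) (fun i => inv_ne_zero (hne i))
      hcinv (by intro i y hy; rw [inv_inv]; exact hstab a haI i y hy)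
    have hed : Matrix.diagonal (fun i => (a i i)⁻¹) * Matrix.diagonal (fun i => a i i) = 1 := by
      rw [Matrix.diagonal_mul_diagonal]
      ext i j
      rcases eq_or_ne i j with rfl | h
      · simp [inv_mul_cancel₀ (hne i)]
      · simp [Matrix.diagonal_apply_ne _ h, Matrix.one_apply_ne h]
    refine ⟨a * Matrix.diagonal (fun i => (a i i)⁻¹),
      ⟨⟨haT.mul heT, haU.mul heU, hmulVec_im _ _ haI heI⟩, haT.mul heT, fun i => ?_⟩,
      Matrix.diagonal (fun i => a i i),
      ⟨⟨hdT, hdU, hdI⟩, hdU, fun i j hij => Matrix.diagonal_apply_ne _ hij⟩, ?_⟩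
    · rw [Matrix.mul_diagonal]
      exact mul_inv_cancel₀ (hne i)
    · rw [mul_assoc, hed, mul_one]


end ValPaper
end

section
/- Fix n ≥ 1 and let ℓ be an index with n ≤ ℓ < n(n+1)/2, corresponding to the pair (i, j), and set d = j − i. Then G_ℓ is a normal subgroup of U_n(K), and for every u ∈ U_n(K) and g ∈ G_ℓ the commutator u·g·u^{-1}·g^{-1} lies in G_{ℓ'}, where ℓ' is the index of the pair (0, d+1) if d + 1 ≤ n − 1 and ℓ' = n(n+1)/2 otherwise; in particular the commutator lies in G_{ℓ+1}, so G_ℓ is central in U_n(K) modulo G_{ℓ+1}. -/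
/-!
Membership `g ∈ G_ℓ` says that `g - 1` is supported on the positions `(p, q)`, `p ≤ q`, of
index at least `ℓ`. Since the order of positions refines the order by diagonals, this set is
stable under moving up or to the right, so such supports are preserved by multiplying with
upper-triangular matrices on either side: this gives normality. For the commutator,
`ugu⁻¹g⁻¹ - 1 = ((u - 1)(g - 1) - (g - 1)(u - 1)) u⁻¹g⁻¹`; as `u - 1` lives strictly above the
diagonal and `g - 1` on the diagonals `≥ d`, the commutator minus `1` lives on the diagonals
`≥ d + 1`, whose positions all have index at least `ℓ'` and at least `ℓ + 1`.
-/

namespace ValPaper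

/-- The index of the pair `(i, j)` (with `i ≤ j < n`) when such pairs are ordered
first by `j - i` and then by `i`. -/
def pairIndex (n i j : ℕ) : ℕ := (j - i) * n - (j - i) * ((j - i) - 1) / 2 + i

open Finset

theorem pairIndex_eq_pairIndex_zero_add (n p q : ℕ) :
    pairIndex n p q = pairIndex n 0 (q - p) + p := by
  simp [pairIndex]

/-- The first pair of the `e`-th diagonal comes after the `n - k` pairs of each diagonal `k < e`. -/
theorem pairIndex_zero_eq_sum {n e : ℕ} (he : e ≤ n) :
    pairIndex n 0 e = ∑ k ∈ range e, (n - k) := by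
  have hsum : ∑ k ∈ range e, (n - k) + ∑ k ∈ range e, k = e * n := by
    rw [← sum_add_distrib, sum_congr rfl fun k hk => Nat.sub_add_cancel
      (by have := mem_range.mp hk; omega), sum_const, card_range, smul_eq_mul]
  have := sum_range_id e
  simp only [pairIndex, Nat.sub_zero, add_zero]
  omega

theorem pairIndex_lt_pairIndex_of_sub_lt {n p q p' q' : ℕ} (hpq : p ≤ q) (hq : q < n) (hq' : q' < n)
    (h : q - p < q' - p') : pairIndex n p q < pairIndex n p' q' := by
  rw [pairIndex_eq_pairIndex_zero_add n p q, pairIndex_eq_pairIndex_zero_add n p' q',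
    pairIndex_zero_eq_sum (by omega), pairIndex_zero_eq_sum (by omega)]
  calc ∑ k ∈ range (q - p), (n - k) + p
      < ∑ k ∈ range (q - p + 1), (n - k) := by rw [sum_range_succ]; omega
    _ ≤ ∑ k ∈ range (q' - p'), (n - k) :=
      sum_le_sum_of_subset (range_subset_range.mpr h)
    _ ≤ ∑ k ∈ range (q' - p'), (n - k) + p' := Nat.le_add_right _ _

theorem pairIndex_le_pairIndex {n p q p' q' : ℕ} (hp : p' ≤ p) (hpq : p ≤ q) (hq : q ≤ q')
    (hq' : q' < n) : pairIndex n p q ≤ pairIndex n p' q' := by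
  rcases lt_or_ge (q - p) (q' - p') with h | h
  · exact (pairIndex_lt_pairIndex_of_sub_lt hpq (by omega) hq' h).le
  · obtain rfl : p = p' := by omega
    obtain rfl : q = q' := by omega
    rfl

theorem Units.val_commutator_sub_one {A : Type*} [Ring A] (u g : Aˣ) :
    (↑(u * g * u⁻¹ * g⁻¹) : A) - 1 =
      (((u : A) - 1) * ((g : A) - 1) - ((g : A) - 1) * ((u : A) - 1)) * ↑(u⁻¹ * g⁻¹) := by
  have hexpand : ((u : A) - 1) * ((g : A) - 1) - ((g : A) - 1) * ((u : A) - 1) =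
      u * g - g * u := by noncomm_ring
  rw [hexpand]
  simp only [Units.val_mul, sub_mul, mul_assoc, Units.mul_inv_cancel_left, Units.mul_inv]

section Support

variable {ι R : Type*}

def SupportedIn [Zero R] (S : Set (ι × ι)) (M : Matrix ι ι R) : Prop :=
  ∀ p q, (p, q) ∉ S → M p q = 0

variable {S T : Set (ι × ι)} {M N U : Matrix ι ι R}

theorem SupportedIn.mono [Zero R] (hM : SupportedIn S M) (hST : S ⊆ T) : SupportedIn T M :=
  fun p q hpq => hM p q fun h => hpq (hST h)

theorem SupportedIn.sub [AddGroup R] (hM : SupportedIn S M) (hN : SupportedIn S N) :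
    SupportedIn S (M - N) := fun p q hpq => by
  rw [Matrix.sub_apply, hM p q hpq, hN p q hpq, sub_zero]

variable [LinearOrder ι] [Fintype ι]

def IsUpRightClosed (S : Set (ι × ι)) : Prop :=
  ∀ ⦃p q p' q'⦄, (p, q) ∈ S → p' ≤ p → q ≤ q' → (p', q') ∈ S

theorem SupportedIn.blockTriangular_mul [NonUnitalNonAssocSemiring R]
    (hS : IsUpRightClosed S) (hU : U.BlockTriangular id) (hM : SupportedIn S M) :
    SupportedIn S (U * M) := fun p q hpq => by
  rw [Matrix.mul_apply]
  refine sum_eq_zero fun k _ => ?_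
  by_cases hk : (k, q) ∈ S
  · rw [hU (show k < p from lt_of_not_ge fun h => hpq (hS hk h le_rfl)), zero_mul]
  · rw [hM k q hk, mul_zero]

theorem SupportedIn.mul_blockTriangular [NonUnitalNonAssocSemiring R]
    (hS : IsUpRightClosed S) (hU : U.BlockTriangular id) (hM : SupportedIn S M) :
    SupportedIn S (M * U) := fun p q hpq => by
  rw [Matrix.mul_apply]
  refine sum_eq_zero fun k _ => ?_
  by_cases hk : (p, k) ∈ S
  · rw [hU (show q < k from lt_of_not_ge fun h => hpq (hS hk le_rfl h)), mul_zero]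
  · rw [hM p k hk, zero_mul]

theorem blockTriangular_units_inv [CommRing R] {u : (Matrix ι ι R)ˣ}
    (hu : (u : Matrix ι ι R).BlockTriangular id) :
    (↑u⁻¹ : Matrix ι ι R).BlockTriangular id := by
  have := u.invertible
  rw [Matrix.coe_units_inv]
  exact Matrix.blockTriangular_inv_of_blockTriangular hu

theorem supportedIn_conj_sub_one [CommRing R] (hS : IsUpRightClosed S)
    {u g : (Matrix ι ι R)ˣ} (hu : (u : Matrix ι ι R).BlockTriangular id)
    (hg : SupportedIn S ((g : Matrix ι ι R) - 1)) :
    SupportedIn S ((↑(u * g * u⁻¹) : Matrix ι ι R) - 1) := by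
  have hconj : (↑(u * g * u⁻¹) : Matrix ι ι R) - 1 = u * (g - 1) * (↑u⁻¹ : Matrix ι ι R) := by
    rw [mul_sub_one, sub_mul, Units.mul_inv, Units.val_mul, Units.val_mul]
  rw [hconj]
  exact (hg.blockTriangular_mul hS hu).mul_blockTriangular hS (blockTriangular_units_inv hu)

end Support

section Superdiags

variable {n : ℕ} {R : Type*}

def superdiags (n d : ℕ) : Set (Fin n × Fin n) := {x | (x.1 : ℕ) + d ≤ x.2}

@[simp]
theorem mem_superdiags {d : ℕ} {x : Fin n × Fin n} : x ∈ superdiags n d ↔ (x.1 : ℕ) + d ≤ x.2 :=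
  Iff.rfl

theorem isUpRightClosed_superdiags (n d : ℕ) : IsUpRightClosed (superdiags n d) := by
  intro p q p' q' h hp hq
  simp only [mem_superdiags, Fin.le_def] at *
  omega

theorem superdiags_eq_empty {d : ℕ} (h : n ≤ d) : superdiags n d = ∅ := by
  ext ⟨p, q⟩
  simp only [mem_superdiags, Set.mem_empty_iff_false, iff_false]
  omega

theorem SupportedIn.mul_of_superdiags [NonUnitalNonAssocSemiring R] {a b : ℕ}
    {M N : Matrix (Fin n) (Fin n) R} (hM : SupportedIn (superdiags n a) M)
    (hN : SupportedIn (superdiags n b) N) : SupportedIn (superdiags n (a + b)) (M * N) :=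
  fun p q hpq => by
  rw [Matrix.mul_apply]
  refine sum_eq_zero fun k _ => ?_
  by_cases hk : (p, k) ∈ superdiags n a
  · refine mul_eq_zero_of_right _ (hN k q fun hkq => hpq ?_)
    simp only [mem_superdiags] at hk hkq ⊢
    omega
  · rw [hM p k hk, zero_mul]

theorem blockTriangular_of_supportedIn_superdiags [Ring R] {d : ℕ}
    {A : Matrix (Fin n) (Fin n) R} (hA : SupportedIn (superdiags n d) (A - 1)) :
    A.BlockTriangular id := fun p q (hqp : q < p) => by
  have h := hA p q fun h => by simp only [mem_superdiags, Fin.lt_def] at h hqp; omega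
  rwa [Matrix.sub_apply, Matrix.one_apply_ne hqp.ne', sub_zero] at h

theorem supportedIn_superdiags_one_iff [Ring R] {A : Matrix (Fin n) (Fin n) R} :
    SupportedIn (superdiags n 1) (A - 1) ↔ A.BlockTriangular id ∧ ∀ i, A i i = 1 := by
  refine ⟨fun hA => ⟨blockTriangular_of_supportedIn_superdiags hA, fun i => ?_⟩, ?_⟩
  · have h := hA i i fun h => by simp only [mem_superdiags] at h; omega
    rwa [Matrix.sub_apply, Matrix.one_apply_eq, sub_eq_zero] at h
  · rintro ⟨hA, hdiag⟩ p q hpq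
    simp only [mem_superdiags, not_le, Nat.lt_succ_iff] at hpq
    rcases hpq.lt_or_eq with hqp | hqp
    · rw [Matrix.sub_apply, hA (Fin.lt_def.mpr hqp), Matrix.one_apply_ne (Fin.ne_of_gt hqp),
        sub_zero]
    · rw [Fin.ext hqp, Matrix.sub_apply, hdiag, Matrix.one_apply_eq, sub_self]

theorem supportedIn_superdiags_commutator_sub_one [CommRing R] {d : ℕ}
    {u g : (Matrix (Fin n) (Fin n) R)ˣ}
    (hu : SupportedIn (superdiags n 1) ((u : Matrix (Fin n) (Fin n) R) - 1))
    (hg : SupportedIn (superdiags n d) ((g : Matrix (Fin n) (Fin n) R) - 1)) :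
    SupportedIn (superdiags n (d + 1))
      ((↑(u * g * u⁻¹ * g⁻¹) : Matrix (Fin n) (Fin n) R) - 1) := by
  have hinv : (↑(u⁻¹ * g⁻¹) : Matrix (Fin n) (Fin n) R).BlockTriangular id := by
    rw [Units.val_mul]
    exact (blockTriangular_units_inv (blockTriangular_of_supportedIn_superdiags hu)).mul
      (blockTriangular_units_inv (blockTriangular_of_supportedIn_superdiags hg))
  rw [Units.val_commutator_sub_one]
  have hdiff := (add_comm 1 d ▸ hu.mul_of_superdiags hg).sub (hg.mul_of_superdiags hu)
  exact hdiff.mul_blockTriangular (isUpRightClosed_superdiags n _) hinv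

end Superdiags

section PositionsFrom

variable {n : ℕ}

def positionsFrom (n ℓ : ℕ) : Set (Fin n × Fin n) :=
  {x | x.1 ≤ x.2 ∧ ℓ ≤ pairIndex n x.1 x.2}

@[simp]
theorem mem_positionsFrom {ℓ : ℕ} {x : Fin n × Fin n} :
    x ∈ positionsFrom n ℓ ↔ x.1 ≤ x.2 ∧ ℓ ≤ pairIndex n x.1 x.2 :=
  Iff.rfl

theorem isUpRightClosed_positionsFrom (n ℓ : ℕ) : IsUpRightClosed (positionsFrom n ℓ) :=
  fun _ _ _ q' ⟨hpq, hℓ⟩ hp hq =>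
    ⟨hp.trans (hpq.trans hq), hℓ.trans (pairIndex_le_pairIndex hp hpq hq q'.isLt)⟩

theorem supportedIn_positionsFrom_iff {R : Type*} [Ring R] {ℓ : ℕ}
    {A : Matrix (Fin n) (Fin n) R} :
    SupportedIn (positionsFrom n ℓ) (A - 1) ↔ A.BlockTriangular id ∧
      ∀ i j : Fin n, (i : ℕ) ≤ (j : ℕ) → pairIndex n i j < ℓ →
        A i j = if i = j then 1 else 0 := by
  refine ⟨fun hA => ⟨fun p q (hqp : q < p) => ?_, fun p q hpq hℓ => ?_⟩, ?_⟩
  · have h := hA p q fun h => absurd h.1 (not_le.mpr hqp)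
    rwa [Matrix.sub_apply, Matrix.one_apply_ne hqp.ne', sub_zero] at h
  · rw [← Matrix.one_apply, ← sub_eq_zero, ← Matrix.sub_apply]
    exact hA p q fun h => absurd h.2 (not_le.mpr hℓ)
  · rintro ⟨hA, hentries⟩ p q hpq
    rw [mem_positionsFrom, not_and_or, not_le, not_le] at hpq
    rcases hpq with hqp | hℓ
    · rw [Matrix.sub_apply, hA hqp, Matrix.one_apply_ne hqp.ne', sub_zero]
    · rcases le_or_gt p q with hle | hqp
      · rw [Matrix.sub_apply, hentries p q hle hℓ, Matrix.one_apply, sub_self]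
      · rw [Matrix.sub_apply, hA hqp, Matrix.one_apply_ne hqp.ne', sub_zero]

theorem positionsFrom_subset_superdiags_one {ℓ : ℕ} (h : n ≤ ℓ) :
    positionsFrom n ℓ ⊆ superdiags n 1 := by
  rintro ⟨p, q⟩ ⟨hpq, hℓ⟩
  dsimp only at hpq hℓ
  rcases hpq.lt_or_eq with hlt | rfl
  · exact hlt
  · simp only [pairIndex, Nat.sub_self, zero_mul, Nat.zero_sub, zero_add] at hℓ
    omega

theorem positionsFrom_pairIndex_subset_superdiags (i j : Fin n) :
    positionsFrom n (pairIndex n i j) ⊆ superdiags n (j - i) := by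
  rintro ⟨p, q⟩ ⟨hpq, hℓ⟩
  dsimp only at hpq hℓ
  by_contra h
  simp only [mem_superdiags, not_le] at h
  exact (pairIndex_lt_pairIndex_of_sub_lt hpq q.isLt j.isLt (by omega)).not_ge hℓ

theorem superdiags_succ_subset_positionsFrom {i j : Fin n} (hij : (i : ℕ) ≤ j) :
    superdiags n (j - i + 1) ⊆ positionsFrom n (pairIndex n i j + 1) := by
  rintro ⟨p, q⟩ h
  simp only [mem_superdiags] at h
  exact ⟨Fin.le_def.mpr (by dsimp only; omega),
    pairIndex_lt_pairIndex_of_sub_lt hij j.isLt q.isLt (by dsimp only; omega)⟩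

theorem superdiags_subset_positionsFrom_pairIndex_zero (e : ℕ) :
    superdiags n e ⊆ positionsFrom n (pairIndex n 0 e) := by
  rintro ⟨p, q⟩ h
  simp only [mem_superdiags] at h
  refine ⟨Fin.le_def.mpr (by dsimp only; omega), ?_⟩
  calc pairIndex n 0 e ≤ pairIndex n 0 (q - p) :=
        pairIndex_le_pairIndex le_rfl (Nat.zero_le _) (by omega) (by omega)
    _ ≤ pairIndex n p q := by rw [pairIndex_eq_pairIndex_zero_add n p q]; omega

end PositionsFrom

theorem unipotent_central_filtration_general (K : Type*) [Field K] (n : ℕ)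
    (Uni : Set (Matrix (Fin n) (Fin n) K)ˣ)
    (hU : Uni = {a : (Matrix (Fin n) (Fin n) K)ˣ |
      (a : Matrix (Fin n) (Fin n) K).BlockTriangular id ∧
        ∀ i, (a : Matrix (Fin n) (Fin n) K) i i = 1})
    (G : ℕ → Set (Matrix (Fin n) (Fin n) K)ˣ)
    (hG : ∀ ℓ, G ℓ = {a : (Matrix (Fin n) (Fin n) K)ˣ |
      (a : Matrix (Fin n) (Fin n) K).BlockTriangular id ∧
      ∀ i j : Fin n, (i : ℕ) ≤ (j : ℕ) → pairIndex n i j < ℓ →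
        (a : Matrix (Fin n) (Fin n) K) i j = if i = j then 1 else 0})
    (ℓ : ℕ) (hℓn : n ≤ ℓ)
    (i j : Fin n) (hij : (i : ℕ) ≤ (j : ℕ)) (hpair : pairIndex n i j = ℓ)
    (d : ℕ) (hd : d = (j : ℕ) - (i : ℕ))
    (ℓ' : ℕ) (hℓ' : ℓ' = if d + 1 ≤ n - 1 then pairIndex n 0 (d+1) else n * (n+1) / 2) :
    (G ℓ ⊆ Uni ∧ ∀ u ∈ Uni, ∀ g ∈ G ℓ, u * g * u⁻¹ ∈ G ℓ) ∧
    (∀ u ∈ Uni, ∀ g ∈ G ℓ, u * g * u⁻¹ * g⁻¹ ∈ G ℓ') ∧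
    (∀ u ∈ Uni, ∀ g ∈ G ℓ, u * g * u⁻¹ * g⁻¹ ∈ G (ℓ+1)) := by
  have memG (m : ℕ) (a : (Matrix (Fin n) (Fin n) K)ˣ) :
      a ∈ G m ↔ SupportedIn (positionsFrom n m) ((a : Matrix (Fin n) (Fin n) K) - 1) := by
    rw [hG, supportedIn_positionsFrom_iff]
    rfl
  have memU (a : (Matrix (Fin n) (Fin n) K)ˣ) :
      a ∈ Uni ↔ SupportedIn (superdiags n 1) ((a : Matrix (Fin n) (Fin n) K) - 1) := by
    rw [hU, supportedIn_superdiags_one_iff]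
    rfl
  subst hpair hd
  have hcomm : ∀ u ∈ Uni, ∀ g ∈ G (pairIndex n i j), SupportedIn (superdiags n (j - i + 1))
      ((↑(u * g * u⁻¹ * g⁻¹) : Matrix (Fin n) (Fin n) K) - 1) := fun u hu g hg =>
    supportedIn_superdiags_commutator_sub_one ((memU u).1 hu)
      (((memG _ g).1 hg).mono (positionsFrom_pairIndex_subset_superdiags i j))
  refine ⟨⟨fun g hg => ?_, fun u hu g hg => ?_⟩, fun u hu g hg => ?_, fun u hu g hg => ?_⟩
  · exact (memU g).2 (((memG _ g).1 hg).mono (positionsFrom_subset_superdiags_one hℓn))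
  · exact (memG _ _).2 (supportedIn_conj_sub_one (isUpRightClosed_positionsFrom n _)
      (blockTriangular_of_supportedIn_superdiags ((memU u).1 hu)) ((memG _ g).1 hg))
  · refine (memG _ _).2 ((hcomm u hu g hg).mono ?_)
    rw [hℓ']
    split_ifs with hdn
    · exact superdiags_subset_positionsFrom_pairIndex_zero _
    · rw [superdiags_eq_empty (by omega)]
      exact Set.empty_subset _
  · exact (memG _ _).2 ((hcomm u hu g hg).mono (superdiags_succ_subset_positionsFrom hij))

/-- for `n ≤ ℓ < n(n+1)/2` with corresponding pair `(i, j)` and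
`d = j - i`, the subgroup `G_ℓ` is normal in `U_n(K)` and commutators of elements
of `U_n(K)` with elements of `G_ℓ` lie in `G_{ℓ'}` (where `ℓ'` is the index of
the pair `(0, d+1)` if `d + 1 ≤ n - 1`, and `ℓ' = n(n+1)/2` otherwise); in
particular they lie in `G_{ℓ+1}`, so `G_ℓ` is central in `U_n(K)` modulo `G_{ℓ+1}`. -/
theorem unipotent_central_filtration (K : Type*) [Field K] (n : ℕ) (hn : 1 ≤ n)
    (Uni : Set (Matrix (Fin n) (Fin n) K)ˣ)
    (hU : Uni = {a : (Matrix (Fin n) (Fin n) K)ˣ |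
      (a : Matrix (Fin n) (Fin n) K).BlockTriangular id ∧
        ∀ i, (a : Matrix (Fin n) (Fin n) K) i i = 1})
    (G : ℕ → Set (Matrix (Fin n) (Fin n) K)ˣ)
    (hG : ∀ ℓ, G ℓ = {a : (Matrix (Fin n) (Fin n) K)ˣ |
      (a : Matrix (Fin n) (Fin n) K).BlockTriangular id ∧
      ∀ i j : Fin n, (i : ℕ) ≤ (j : ℕ) → pairIndex n i j < ℓ →
        (a : Matrix (Fin n) (Fin n) K) i j = if i = j then 1 else 0})
    (ℓ : ℕ) (hℓn : n ≤ ℓ) (hℓT : ℓ < n * (n+1) / 2)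
    (i j : Fin n) (hij : (i : ℕ) ≤ (j : ℕ)) (hpair : pairIndex n i j = ℓ)
    (d : ℕ) (hd : d = (j : ℕ) - (i : ℕ))
    (ℓ' : ℕ) (hℓ' : ℓ' = if d + 1 ≤ n - 1 then pairIndex n 0 (d+1) else n * (n+1) / 2) :
    (G ℓ ⊆ Uni ∧ ∀ u ∈ Uni, ∀ g ∈ G ℓ, u * g * u⁻¹ ∈ G ℓ) ∧
    (∀ u ∈ Uni, ∀ g ∈ G ℓ, u * g * u⁻¹ * g⁻¹ ∈ G ℓ') ∧
    (∀ u ∈ Uni, ∀ g ∈ G ℓ, u * g * u⁻¹ * g⁻¹ ∈ G (ℓ+1)) :=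
  unipotent_central_filtration_general K n Uni hU G hG ℓ hℓn i j hij hpair d hd ℓ' hℓ'

end ValPaper
end

section
/- Assume that K is spherically complete, i.e. every nonempty family of closed balls {x ∈ K | v(x − c) ≥ γ} (c ∈ K, γ ∈ Γ) that is totally ordered by inclusion has nonempty intersection. Then every O-submodule R of K^n is of the form Σ_{i<n} I_i•a_i for some O-submodules I_0, …, I_{n−1} of K and some basis a_0, …, a_{n−1} of K^n that forms the columns of an invertible upper-triangular matrix; that is, R = {Σ_{i<n} t_i·a_i | t_i ∈ I_i for all i}. -/
namespace ValPaper

variable {K : Type*} [Field K] {Γ : Type*} [AddCommGroup Γ] [LinearOrder Γ] [IsOrderedAddMonoid Γ]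

section Aux
open Matrix
variable {n : ℕ}
variable (v : AddValuation K (WithTop Γ))



lemma v_eq_top_iff_s12 {y : K} : v y = ⊤ ↔ y = 0 := by
  constructor
  · intro h
    by_contra hy
    have h1 : v (y * y⁻¹) = v y + v y⁻¹ := v.map_mul _ _
    rw [mul_inv_cancel₀ hy, v.map_one, h, top_add] at h1
    simp at h1
  · rintro rfl; exact v.map_zero

lemma div_mem_O {y w : K} (hw : w ≠ 0) (h : v w ≤ v y) : (0 : WithTop Γ) ≤ v (y * w⁻¹) := by
  rcases eq_or_ne y 0 with rfl | hy
  · simp [v.map_zero, zero_mul]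
  have hwi : w⁻¹ ≠ 0 := inv_ne_zero hw
  obtain ⟨a, ha⟩ := WithTop.ne_top_iff_exists.mp ((v_eq_top_iff_s12 v).not.mpr hw)
  obtain ⟨b, hb⟩ := WithTop.ne_top_iff_exists.mp ((v_eq_top_iff_s12 v).not.mpr hy)
  obtain ⟨c, hc⟩ := WithTop.ne_top_iff_exists.mp ((v_eq_top_iff_s12 v).not.mpr hwi)
  have h1 : v (w * w⁻¹) = v w + v w⁻¹ := v.map_mul _ _
  rw [mul_inv_cancel₀ hw, v.map_one, ← ha, ← hc] at h1
  have hac : a + c = 0 := by exact_mod_cast h1.symm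
  have h2 : v (y * w⁻¹) = v y + v w⁻¹ := v.map_mul _ _
  rw [← hb, ← hc] at h2
  rw [h2]
  rw [← ha, ← hb] at h
  have hab : a ≤ b := by exact_mod_cast h
  have : (0:Γ) ≤ b + c := hac ▸ add_le_add hab (le_refl c)
  exact_mod_cast this

/-- If `v x ≥ v w` then `x` is an `O`-multiple of `w`; membership in submodules. -/
lemma mem_of_le_val {J : Submodule ↥(O v) K} {w x : K} (hw : w ∈ J) (h : v w ≤ v x) : x ∈ J := by
  rcases eq_or_ne w 0 with rfl | hw0
  · rw [v.map_zero, top_le_iff] at h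
    rw [(v_eq_top_iff_s12 v).mp h]; exact J.zero_mem
  · have : x = (⟨x * w⁻¹, div_mem_O v hw0 h⟩ : ↥(O v)) • w := by
      show x = x * w⁻¹ * w
      field_simp
    rw [this]
    exact J.smul_mem _ hw

lemma ball_subset_ball {c c' z : K} {γ γ' : Γ} (hγ : γ ≤ γ')
    (hz : (γ:WithTop Γ) ≤ v (z - c)) (hz' : (γ':WithTop Γ) ≤ v (z - c')) :
    {x : K | (γ':WithTop Γ) ≤ v (x - c')} ⊆ {x : K | (γ:WithTop Γ) ≤ v (x - c)} := by
  intro x hx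
  simp only [Set.mem_setOf_eq] at *
  have hfin : x - c = (x - c') + ((c' - z) + (z - c)) := by ring
  rw [hfin]
  have h1 : (γ:WithTop Γ) ≤ v (c' - z) := by
    rw [show c' - z = -(z - c') by ring, v.map_neg]
    exact le_trans (WithTop.coe_le_coe.mpr hγ) hz'
  have h2 : (γ:WithTop Γ) ≤ v ((c' - z) + (z - c)) :=
    le_trans (le_min h1 hz) (v.map_add _ _)
  exact le_trans (le_min (le_trans (WithTop.coe_le_coe.mpr hγ) hx) h2) (v.map_add _ _)

/-- Chains of cosets of `O`-submodules of `K` have a common point (spherical completeness). -/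
lemma chain_coset_inter
    (hsc : ∀ S : Set (K × Γ), S.Nonempty →
      (∀ p ∈ S, ∀ q ∈ S,
        {x : K | (p.2 : WithTop Γ) ≤ v (x - p.1)} ⊆ {x : K | (q.2 : WithTop Γ) ≤ v (x - q.1)} ∨
        {x : K | (q.2 : WithTop Γ) ≤ v (x - q.1)} ⊆ {x : K | (p.2 : WithTop Γ) ≤ v (x - p.1)}) →
      (⋂ p ∈ S, {x : K | (p.2 : WithTop Γ) ≤ v (x - p.1)}).Nonempty)
    {ι : Type*} [Nonempty ι] (c : ι → K) (J : ι → Submodule ↥(O v) K)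
    (hchain : ∀ i k, {x : K | x - c i ∈ J i} ⊆ {x : K | x - c k ∈ J k} ∨
      {x : K | x - c k ∈ J k} ⊆ {x : K | x - c i ∈ J i}) :
    ∃ x : K, ∀ i, x - c i ∈ J i := by
  set C : ι → Set K := fun i => {x : K | x - c i ∈ J i} with hC
  have hmem : ∀ i, c i ∈ C i := fun i => by simp [hC, (J i).zero_mem]
  by_cases hmin : ∃ i₀, ∀ i, C i₀ ⊆ C i
  · obtain ⟨i₀, h⟩ := hmin
    exact ⟨c i₀, fun i => h i (hmem i₀)⟩
  push_neg at hmin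
  -- for each i, choose k i with C (k i) ⊊ C i, and a ball between them
  have key : ∀ i, ∃ (k : ι) (γ : Γ), C k ⊆ {x : K | (γ:WithTop Γ) ≤ v (x - c k)} ∧
      {x : K | (γ:WithTop Γ) ≤ v (x - c k)} ⊆ C i := by
    intro i
    obtain ⟨k, hk⟩ := hmin i
    have hsub : C k ⊆ C i := (hchain i k).resolve_left hk
    have hne : ¬ C i ⊆ C k := hk
    obtain ⟨z, hzi, hzk⟩ := Set.not_subset.mp hne
    -- y := z - c k ∈ J i (after recentering), y ∉ J k, y ≠ 0
    have hcki : c k ∈ C i := hsub (hmem k)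
    have hyJi : z - c k ∈ J i := by
      have : z - c k = (z - c i) - (c k - c i) := by ring
      rw [this]; exact (J i).sub_mem hzi hcki
    have hyJk : z - c k ∉ J k := hzk
    have hy0 : z - c k ≠ 0 := fun h => hyJk (h ▸ (J k).zero_mem)
    obtain ⟨g, hg⟩ := WithTop.ne_top_iff_exists.mp ((v_eq_top_iff_s12 v).not.mpr hy0)
    refine ⟨k, g, ?_, ?_⟩
    · intro x hx
      simp only [Set.mem_setOf_eq] at *
      rw [hg]
      by_contra hlt
      push_neg at hlt
      exact hyJk (mem_of_le_val v hx hlt.le)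
    · intro x hx
      simp only [Set.mem_setOf_eq, hg] at hx
      have hxk : x - c k ∈ J i := mem_of_le_val v hyJi hx
      show x - c i ∈ J i
      have heq : x - c i = (x - c k) + (c k - c i) := by ring
      rw [heq]
      exact (J i).add_mem hxk hcki
  choose k γ h1 h2 using key
  set S : Set (K × Γ) := Set.range (fun i => (c (k i), γ i)) with hS
  have hSne : S.Nonempty := Set.range_nonempty _
  have hnested : ∀ p ∈ S, ∀ q ∈ S,
      {x : K | (p.2 : WithTop Γ) ≤ v (x - p.1)} ⊆ {x : K | (q.2 : WithTop Γ) ≤ v (x - q.1)} ∨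
      {x : K | (q.2 : WithTop Γ) ≤ v (x - q.1)} ⊆ {x : K | (p.2 : WithTop Γ) ≤ v (x - p.1)} := by
    rintro p ⟨i, rfl⟩ q ⟨m, rfl⟩
    simp only
    -- both balls contain a common point
    have hcom : ∃ z, (↑(γ i) ≤ v (z - c (k i))) ∧ (↑(γ m) ≤ v (z - c (k m))) := by
      rcases hchain (k i) (k m) with h | h
      · exact ⟨c (k i), h1 i (hmem (k i)), h1 m (h (hmem (k i)))⟩
      · exact ⟨c (k m), h1 i (h (hmem (k m))), h1 m (hmem (k m))⟩
    obtain ⟨z, hz1, hz2⟩ := hcom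
    rcases le_total (γ i) (γ m) with hle | hle
    · exact Or.inr (ball_subset_ball v hle hz1 hz2)
    · exact Or.inl (ball_subset_ball v hle hz2 hz1)
  obtain ⟨x, hx⟩ := hsc S hSne hnested
  simp only [Set.mem_iInter] at hx
  refine ⟨x, fun i => ?_⟩
  have : x ∈ {y : K | (↑(γ i):WithTop Γ) ≤ v (y - c (k i))} := hx _ ⟨i, rfl⟩
  exact h2 i this


/-- Extend an `n×n` matrix by a new last column `w` and last row `(0,…,0,1)`. -/
def ext (A : Matrix (Fin n) (Fin n) K) (w : Fin n → K) : Matrix (Fin (n+1)) (Fin (n+1)) K :=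
  Matrix.of (Fin.lastCases (Fin.snoc 0 1) (fun i => Fin.snoc (A i) (w i)))

@[simp] lemma ext_cc (A : Matrix (Fin n) (Fin n) K) (w : Fin n → K) (i j : Fin n) :
    ext A w i.castSucc j.castSucc = A i j := by
  simp [ext, Fin.lastCases_castSucc, Fin.snoc_castSucc]

@[simp] lemma ext_cl (A : Matrix (Fin n) (Fin n) K) (w : Fin n → K) (i : Fin n) :
    ext A w i.castSucc (Fin.last n) = w i := by
  simp [ext, Fin.lastCases_castSucc, Fin.snoc_last]

@[simp] lemma ext_lc (A : Matrix (Fin n) (Fin n) K) (w : Fin n → K) (j : Fin n) :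
    ext A w (Fin.last n) j.castSucc = 0 := by
  simp [ext, Fin.lastCases_last, Fin.snoc_castSucc]

@[simp] lemma ext_ll (A : Matrix (Fin n) (Fin n) K) (w : Fin n → K) :
    ext A w (Fin.last n) (Fin.last n) = 1 := by
  simp [ext, Fin.lastCases_last, Fin.snoc_last]

lemma ext_mul (A B : Matrix (Fin n) (Fin n) K) (w u : Fin n → K) :
    ext A w * ext B u = ext (A * B) (A *ᵥ u + w) := by
  ext i j
  rw [Matrix.mul_apply, Fin.sum_univ_castSucc]
  refine Fin.lastCases ?_ (fun i => ?_) i <;> refine Fin.lastCases ?_ (fun j => ?_) j <;>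
    simp [Matrix.mul_apply, Matrix.mulVec, dotProduct]

lemma ext_one : (ext 1 0 : Matrix (Fin (n+1)) (Fin (n+1)) K) = 1 := by
  ext i j
  refine Fin.lastCases ?_ (fun i => ?_) i <;> refine Fin.lastCases ?_ (fun j => ?_) j <;>
    simp [Matrix.one_apply, Fin.castSucc_lt_last, (Fin.castSucc_lt_last _).ne,
      (Fin.castSucc_lt_last _).ne', Fin.castSucc_inj]

lemma ext_mulVec (A : Matrix (Fin n) (Fin n) K) (w : Fin n → K) (x : Fin (n+1) → K) :
    ext A w *ᵥ x = Fin.snoc (A *ᵥ Fin.init x + x (Fin.last n) • w) (x (Fin.last n)) := by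
  ext i
  refine Fin.lastCases ?_ (fun i => ?_) i <;>
    rw [Matrix.mulVec, dotProduct, Fin.sum_univ_castSucc] <;>
    simp [Matrix.mulVec, dotProduct, Fin.init, mul_comm]

lemma ext_blockTriangular {A : Matrix (Fin n) (Fin n) K} (hA : A.BlockTriangular id)
    (w : Fin n → K) : (ext A w).BlockTriangular id := by
  intro i j hij
  simp only [id] at hij
  rcases Fin.eq_castSucc_or_eq_last i with ⟨i', rfl⟩ | rfl <;>
    rcases Fin.eq_castSucc_or_eq_last j with ⟨j', rfl⟩ | rfl
  · rw [ext_cc]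
    exact hA (by simpa [Fin.castSucc_lt_castSucc_iff] using hij)
  · exact absurd hij (not_lt.mpr (Fin.le_last _))
  · exact ext_lc A w j'
  · exact absurd hij (lt_irrefl _)



/-- scaling a submodule: `{x | a * x ∈ J}`. -/
def scaled (a : K) (J : Submodule ↥(O v) K) : Submodule ↥(O v) K where
  carrier := {x : K | a * x ∈ J}
  add_mem' {x y} hx hy := by
    simp only [Set.mem_setOf_eq, mul_add] at *
    exact J.add_mem hx hy
  zero_mem' := by simp only [Set.mem_setOf_eq, mul_zero]; exact J.zero_mem
  smul_mem' c x hx := by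
    simp only [Set.mem_setOf_eq] at *
    have : a * (c • x) = c • (a * x) := by
      show a * ((c:K) * x) = (c:K) * (a * x); ring
    rw [this]
    exact J.smul_mem c hx

lemma mem_scaled {a : K} {J : Submodule ↥(O v) K} {x : K} : x ∈ scaled v a J ↔ a * x ∈ J :=
  Iff.rfl

/-- `y ↦ Fin.snoc y 0` as a linear map. -/
def snocL (n : ℕ) : (Fin n → K) →ₗ[↥(O v)] (Fin (n+1) → K) where
  toFun y := Fin.snoc y 0
  map_add' y z := by
    ext i
    rcases Fin.eq_castSucc_or_eq_last i with ⟨i', rfl⟩ | rfl <;>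
      simp [Fin.snoc_castSucc, Fin.snoc_last]
  map_smul' c y := by
    ext i
    rcases Fin.eq_castSucc_or_eq_last i with ⟨i', rfl⟩ | rfl <;>
      simp [Fin.snoc_castSucc, Fin.snoc_last]

open Matrix in
lemma sum_smul_col {n : ℕ} (M : Matrix (Fin n) (Fin n) K) (t : Fin n → K) :
    ∑ i : Fin n, t i • (fun j => M j i) = M *ᵥ t := by
  funext j
  simp [Matrix.mulVec, dotProduct, Finset.sum_apply, mul_comm]

open Matrix in
theorem aux
    (hsc : ∀ S : Set (K × Γ), S.Nonempty →
      (∀ p ∈ S, ∀ q ∈ S,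
        {x : K | (p.2 : WithTop Γ) ≤ v (x - p.1)} ⊆ {x : K | (q.2 : WithTop Γ) ≤ v (x - q.1)} ∨
        {x : K | (q.2 : WithTop Γ) ≤ v (x - q.1)} ⊆ {x : K | (p.2 : WithTop Γ) ≤ v (x - p.1)}) →
      (⋂ p ∈ S, {x : K | (p.2 : WithTop Γ) ≤ v (x - p.1)}).Nonempty) :
    ∀ (n : ℕ) (R : Submodule ↥(O v) (Fin n → K)),
    ∃ (A C : Matrix (Fin n) (Fin n) K) (I : Fin n → Submodule ↥(O v) K),
      A.BlockTriangular id ∧ A * C = 1 ∧ C * A = 1 ∧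
      ∀ x, x ∈ R ↔ ∀ i, (C *ᵥ x) i ∈ I i := by
  intro n
  induction n with
  | zero =>
    intro R
    refine ⟨1, 1, fun i => ⊥, Matrix.blockTriangular_one, one_mul 1, one_mul 1, fun x => ?_⟩
    constructor
    · intro _ i; exact i.elim0
    · intro _
      have : x = 0 := Subsingleton.elim x 0
      rw [this]; exact R.zero_mem
  | succ n IH =>
    intro R
    -- the submodule of "first n coordinates" elements
    set R₀ : Submodule ↥(O v) (Fin n → K) := R.comap (snocL v n) with hR₀
    obtain ⟨A', C', I', htri, hAC, hCA, hmem⟩ := IH R₀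
    -- last-coordinate projection image
    set In : Submodule ↥(O v) K := R.map (LinearMap.proj (R := ↥(O v)) (Fin.last n)) with hIn
    have hInmem : ∀ x ∈ R, x (Fin.last n) ∈ In := fun x hx => ⟨x, hx, rfl⟩
    -- key: snoc y 0 ∈ R ↔ y ∈ R₀ (defn)
    have hsnoc : ∀ y : Fin n → K, Fin.snoc y 0 ∈ R ↔ y ∈ R₀ := fun y => Iff.rfl
    -- splitting: find β
    have hβ : ∃ β : Fin n → K, ∀ t ∈ In, (Fin.snoc (t • (A' *ᵥ β)) t : Fin (n+1) → K) ∈ R := by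
      by_cases hbot : ∀ t ∈ In, t = 0
      · refine ⟨0, fun t ht => ?_⟩
        have ht0 := hbot t ht
        subst ht0
        have : (Fin.snoc ((0:K) • (A' *ᵥ (0 : Fin n → K))) (0:K) : Fin (n+1) → K) = 0 := by
          funext i
          rcases Fin.eq_castSucc_or_eq_last i with ⟨i', rfl⟩ | rfl <;>
            simp [Fin.snoc_castSucc, Fin.snoc_last]
        rw [this]; exact R.zero_mem
      · push_neg at hbot
        obtain ⟨t₀, ht₀, ht₀0⟩ := hbot
        haveI : Nonempty {t : K // t ∈ In ∧ t ≠ 0} := ⟨⟨t₀, ht₀, ht₀0⟩⟩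
        -- representatives
        have hrep : ∀ t : {t : K // t ∈ In ∧ t ≠ 0}, ∃ r, r ∈ R ∧ r (Fin.last n) = (t : K) := by
          rintro ⟨t, ht, ht0⟩
          obtain ⟨r, hr, hrl⟩ := Submodule.mem_map.mp ht
          exact ⟨r, hr, hrl⟩
        choose r hrR hrl using hrep
        set γf : {t : K // t ∈ In ∧ t ≠ 0} → Fin n → K := fun t => C' *ᵥ Fin.init (r t) with hγf
        -- the key compatibility: for u = s/t ∈ O, u γ_t - γ_s ∈ I'
        have hcompat : ∀ (t s : {t : K // t ∈ In ∧ t ≠ 0}) (u : K) (hu : 0 ≤ v u)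
            (hut : u * (t:K) = (s:K)), ∀ j, u * γf t j - γf s j ∈ I' j := by
          intro t s u hu hut j
          set z : Fin (n+1) → K := (⟨u, hu⟩ : ↥(O v)) • r t - r s with hz
          have hzR : z ∈ R := R.sub_mem (R.smul_mem _ (hrR t)) (hrR s)
          have hzl : z (Fin.last n) = 0 := by
            show u * r t (Fin.last n) - r s (Fin.last n) = 0
            rw [hrl, hrl, hut, sub_self]
          have hz0 : Fin.init z ∈ R₀ := by
            rw [← hsnoc]
            have : (Fin.snoc (Fin.init z) 0 : Fin (n+1) → K) = z := by
              rw [← hzl]; exact Fin.snoc_init_self z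
            rw [this]; exact hzR
          have := (hmem _).mp hz0 j
          have hinit : Fin.init z = u • Fin.init (r t) - Fin.init (r s) := by
            funext j'
            show z j'.castSucc = u * r t j'.castSucc - r s j'.castSucc
            rfl
          have hCz : (C' *ᵥ Fin.init z) j = u * γf t j - γf s j := by
            rw [hinit, Matrix.mulVec_sub, Matrix.mulVec_smul]
            simp [hγf, smul_eq_mul]
          rwa [hCz] at this
        -- coordinatewise application of chain_coset_inter
        have hcoord : ∀ j : Fin n, ∃ b : K,
            ∀ t : {t : K // t ∈ In ∧ t ≠ 0}, (t:K) * b - γf t j ∈ I' j := by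
          intro j
          have hcos : ∀ (t : {t : K // t ∈ In ∧ t ≠ 0}) (x : K),
              x - (t:K)⁻¹ * γf t j ∈ scaled v (t:K) (I' j) ↔ (t:K) * x - γf t j ∈ I' j := by
            intro t x
            rw [mem_scaled]
            have : (t:K) * (x - (t:K)⁻¹ * γf t j) = (t:K) * x - γf t j := by
              field_simp [t.2.2]
            rw [this]
          have hchain : ∀ t s : {t : K // t ∈ In ∧ t ≠ 0},
              {x : K | x - (t:K)⁻¹ * γf t j ∈ scaled v (t:K) (I' j)} ⊆
                {x : K | x - (s:K)⁻¹ * γf s j ∈ scaled v (s:K) (I' j)} ∨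
              {x : K | x - (s:K)⁻¹ * γf s j ∈ scaled v (s:K) (I' j)} ⊆
                {x : K | x - (t:K)⁻¹ * γf t j ∈ scaled v (t:K) (I' j)} := by
            have main : ∀ t s : {t : K // t ∈ In ∧ t ≠ 0}, v (t:K) ≤ v (s:K) →
                {x : K | x - (t:K)⁻¹ * γf t j ∈ scaled v (t:K) (I' j)} ⊆
                  {x : K | x - (s:K)⁻¹ * γf s j ∈ scaled v (s:K) (I' j)} := by
              intro t s hts x hx
              simp only [Set.mem_setOf_eq, hcos] at hx ⊢
              set u : K := (s:K) * (t:K)⁻¹ with hu'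
              have hu : 0 ≤ v u := div_mem_O v t.2.2 hts
              have hut : u * (t:K) = (s:K) := by
                rw [hu']; field_simp [t.2.2]
              have h1 : (s:K) * x - γf s j
                  = u * ((t:K) * x - γf t j) + (u * γf t j - γf s j) := by
                rw [← hut]; ring
              rw [h1]
              refine (I' j).add_mem ?_ (hcompat t s u hu hut j)
              exact (I' j).smul_mem (⟨u, hu⟩ : ↥(O v)) hx
            intro t s
            rcases le_total (v (t:K)) (v (s:K)) with h | h
            · exact Or.inl (main t s h)
            · exact Or.inr (main s t h)
          obtain ⟨b, hb⟩ := chain_coset_inter v hsc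
            (fun t : {t : K // t ∈ In ∧ t ≠ 0} => (t:K)⁻¹ * γf t j)
            (fun t => scaled v (t:K) (I' j)) hchain
          exact ⟨b, fun t => (hcos t b).mp (hb t)⟩
        choose β hβprop using hcoord
        refine ⟨β, fun t ht => ?_⟩
        rcases eq_or_ne t 0 with rfl | ht0
        · have : (Fin.snoc ((0:K) • (A' *ᵥ β)) (0:K) : Fin (n+1) → K) = 0 := by
            funext i
            rcases Fin.eq_castSucc_or_eq_last i with ⟨i', rfl⟩ | rfl <;>
              simp [Fin.snoc_castSucc, Fin.snoc_last]
          rw [this]; exact R.zero_mem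
        · set tt : {t : K // t ∈ In ∧ t ≠ 0} := ⟨t, ht, ht0⟩ with htt
          have hy : t • (A' *ᵥ β) - Fin.init (r tt) ∈ R₀ := by
            rw [hmem]
            intro j
            have h1 : (C' *ᵥ (t • (A' *ᵥ β) - Fin.init (r tt))) j
                = t * β j - γf tt j := by
              rw [Matrix.mulVec_sub, Matrix.mulVec_smul, Matrix.mulVec_mulVec, hCA,
                Matrix.one_mulVec]
              simp [hγf, smul_eq_mul]
            rw [h1]
            exact hβprop j tt
          have h2 : (Fin.snoc (t • (A' *ᵥ β)) t : Fin (n+1) → K)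
              = Fin.snoc (t • (A' *ᵥ β) - Fin.init (r tt)) 0 + r tt := by
            funext i
            rcases Fin.eq_castSucc_or_eq_last i with ⟨i', rfl⟩ | rfl <;>
              simp [Fin.snoc_castSucc, Fin.snoc_last, Fin.init, hrl tt] <;> rfl
          rw [h2]
          exact R.add_mem ((hsnoc _).mpr hy) (hrR tt)
    obtain ⟨β, hβR⟩ := hβ
    -- assemble the matrices
    refine ⟨ext A' (A' *ᵥ β), ext C' (-β), Fin.snoc I' In,
      ext_blockTriangular htri _, ?_, ?_, ?_⟩
    · rw [ext_mul, hAC, Matrix.mulVec_neg, neg_add_cancel, ext_one]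
    · rw [ext_mul, hCA, Matrix.mulVec_mulVec, hCA, Matrix.one_mulVec, add_neg_cancel, ext_one]
    · intro x
      rw [ext_mulVec]
      have hIlast : (Fin.snoc I' In : Fin (n+1) → Submodule ↥(O v) K) (Fin.last n) = In :=
        Fin.snoc_last _ _
      have hIc : ∀ j : Fin n,
          (Fin.snoc I' In : Fin (n+1) → Submodule ↥(O v) K) j.castSucc = I' j :=
        fun j => Fin.snoc_castSucc _ _ _
      constructor
      · intro hx i
        have hxl : x (Fin.last n) ∈ In := hInmem x hx
        set q : Fin (n+1) → K := Fin.snoc (x (Fin.last n) • (A' *ᵥ β)) (x (Fin.last n)) with hq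
        have hz : x - q ∈ R := R.sub_mem hx (hβR _ hxl)
        have hzl : (x - q) (Fin.last n) = 0 := by
          show x (Fin.last n) - q (Fin.last n) = 0
          rw [hq, Fin.snoc_last, sub_self]
        have hz0 : Fin.init (x - q) ∈ R₀ := by
          rw [← hsnoc]
          have heq2 : (Fin.snoc (Fin.init (x - q)) 0 : Fin (n+1) → K) = x - q := by
            rw [← hzl]; exact Fin.snoc_init_self _
          rw [heq2]; exact hz
        have hinit : Fin.init (x - q) = Fin.init x - x (Fin.last n) • (A' *ᵥ β) := by
          funext j'
          show (x - q) j'.castSucc = x j'.castSucc - (x (Fin.last n) • (A' *ᵥ β)) j'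
          have : q j'.castSucc = (x (Fin.last n) • (A' *ᵥ β)) j' := by
            rw [hq]; exact Fin.snoc_castSucc _ _ _
          rw [Pi.sub_apply, this]
        rw [hinit] at hz0
        rcases Fin.eq_castSucc_or_eq_last i with ⟨j, rfl⟩ | rfl
        · simp only [Fin.snoc_castSucc]
          have hmm := (hmem _).mp hz0 j
          have heq : (C' *ᵥ (Fin.init x - x (Fin.last n) • (A' *ᵥ β))) j
              = (C' *ᵥ Fin.init x + x (Fin.last n) • (-β)) j := by
            rw [Matrix.mulVec_sub, Matrix.mulVec_smul, Matrix.mulVec_mulVec, hCA,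
              Matrix.one_mulVec]
            simp [sub_eq_add_neg]
          rwa [heq] at hmm
        · simp only [Fin.snoc_last]
          exact hxl
      · intro hx
        have hxl : x (Fin.last n) ∈ In := by
          have h3 := hx (Fin.last n)
          simpa only [Fin.snoc_last] using h3
        have hy : Fin.init x - x (Fin.last n) • (A' *ᵥ β) ∈ R₀ := by
          rw [hmem]
          intro j
          have heq : (C' *ᵥ (Fin.init x - x (Fin.last n) • (A' *ᵥ β))) j
              = (C' *ᵥ Fin.init x + x (Fin.last n) • (-β)) j := by
            rw [Matrix.mulVec_sub, Matrix.mulVec_smul, Matrix.mulVec_mulVec, hCA,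
              Matrix.one_mulVec]
            simp [sub_eq_add_neg]
          rw [heq]
          have h4 := hx j.castSucc
          simpa only [Fin.snoc_castSucc] using h4
        have h2 : x = (Fin.snoc (Fin.init x - x (Fin.last n) • (A' *ᵥ β)) 0 : Fin (n+1) → K)
            + (Fin.snoc (x (Fin.last n) • (A' *ᵥ β)) (x (Fin.last n)) : Fin (n+1) → K) := by
          funext i
          rcases Fin.eq_castSucc_or_eq_last i with ⟨i', rfl⟩ | rfl <;>
            simp [Fin.snoc_castSucc, Fin.snoc_last, Fin.init]
        rw [h2]
        exact R.add_mem ((hsnoc _).mpr hy) (hβR _ hxl)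

lemma isUnit_of_mul_eq_one' {n : ℕ} (A C : Matrix (Fin n) (Fin n) K)
    (h1 : A * C = 1) (h2 : C * A = 1) : IsUnit A := ⟨⟨A, C, h1, h2⟩, rfl⟩

end Aux

/-- if `K` is spherically complete, then every `O`-submodule of `K^n`
is of the form `Σ_{i<n} I_i•a_i` where the `a_i` are the columns of an invertible
upper-triangular matrix and the `I_i` are `O`-submodules of `K`. -/
theorem submodule_has_triangular_separated_basis (v : AddValuation K (WithTop Γ))
    (hv : Function.Surjective v)
    (hsc : ∀ S : Set (K × Γ), S.Nonempty →
      (∀ p ∈ S, ∀ q ∈ S,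
        {x : K | (p.2 : WithTop Γ) ≤ v (x - p.1)} ⊆ {x : K | (q.2 : WithTop Γ) ≤ v (x - q.1)} ∨
        {x : K | (q.2 : WithTop Γ) ≤ v (x - q.1)} ⊆ {x : K | (p.2 : WithTop Γ) ≤ v (x - p.1)}) →
      (⋂ p ∈ S, {x : K | (p.2 : WithTop Γ) ≤ v (x - p.1)}).Nonempty)
    (n : ℕ) (R : Submodule ↥(O v) (Fin n → K)) :
    ∃ (A : Matrix (Fin n) (Fin n) K) (I : Fin n → Submodule ↥(O v) K),
      A.BlockTriangular id ∧ IsUnit A ∧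
      (R : Set (Fin n → K)) = {x : Fin n → K | ∃ t : Fin n → K,
        (∀ i, t i ∈ I i) ∧ x = ∑ i : Fin n, t i • (fun j => A j i)} := by
  obtain ⟨A, C, I, htri, hAC, hCA, hmem⟩ := aux v hsc n R
  refine ⟨A, I, htri, isUnit_of_mul_eq_one' A C hAC hCA, ?_⟩
  ext x
  simp only [Set.mem_setOf_eq, SetLike.mem_coe]
  constructor
  · intro hx
    refine ⟨C.mulVec x, (hmem x).mp hx, ?_⟩
    rw [sum_smul_col, Matrix.mulVec_mulVec, hAC, Matrix.one_mulVec]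
  · rintro ⟨t, ht, rfl⟩
    rw [sum_smul_col]
    rw [hmem]
    intro i
    rw [Matrix.mulVec_mulVec, hCA, Matrix.one_mulVec]
    exact ht i

end ValPaper
end

section
/- Let Γ ≤ Γ' be linearly ordered abelian groups (Γ a subgroup of Γ' with the induced order) such that for every x ∈ Γ' there exists an integer n ≥ 1 with n·x ∈ Γ. Then the map Δ' ↦ Δ' ∩ Γ is a bijection from the set of convex subgroups of Γ' onto the set of convex subgroups of Γ, with inverse Δ ↦ {x ∈ Γ' | ∃ n ≥ 1, n·x ∈ Δ}. -/
namespace ValPaper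

section Aux

variable {Γ' : Type*} [AddCommGroup Γ'] [LinearOrder Γ'] [IsOrderedAddMonoid Γ']

private lemma le_nsmul_self' {x : Γ'} (hx : 0 ≤ x) {n : ℕ} (hn : 1 ≤ n) :
    x ≤ n • x := by
  calc x = 1 • x := (one_nsmul x).symm
  _ ≤ n • x := nsmul_le_nsmul_left hx hn

/-- The saturation of a subgroup. -/
private def sat (Δ : AddSubgroup Γ') : AddSubgroup Γ' where
  carrier := {x | ∃ n : ℕ, 1 ≤ n ∧ n • x ∈ Δ}
  zero_mem' := ⟨1, le_refl 1, by simpa using Δ.zero_mem⟩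
  add_mem' := by
    rintro a b ⟨n, hn, ha⟩ ⟨m, hm, hb⟩
    refine ⟨n * m, Nat.one_le_iff_ne_zero.2 (by positivity), ?_⟩
    rw [smul_add]
    refine Δ.add_mem ?_ ?_
    · rw [mul_nsmul]; exact Δ.nsmul_mem ha m
    · rw [mul_comm, mul_nsmul]; exact Δ.nsmul_mem hb n
  neg_mem' := by
    rintro a ⟨n, hn, ha⟩
    exact ⟨n, hn, by simpa using Δ.neg_mem ha⟩

private lemma mem_sat {Δ : AddSubgroup Γ'} {x : Γ'} :
    x ∈ sat Δ ↔ ∃ n : ℕ, 1 ≤ n ∧ n • x ∈ Δ := Iff.rfl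

end Aux

/-- if `Γ ≤ Γ'` are linearly ordered abelian groups such that every
element of `Γ'` has a positive multiple in `Γ`, then `Δ' ↦ Δ' ∩ Γ` is a bijection
from the convex subgroups of `Γ'` onto the convex subgroups of `Γ`, with inverse
`Δ ↦ {x ∈ Γ' | ∃ n ≥ 1, n·x ∈ Δ}`. -/
theorem convex_subgroup_correspondence {Γ' : Type*} [AddCommGroup Γ'] [LinearOrder Γ'] [IsOrderedAddMonoid Γ']
    (H : AddSubgroup Γ')
    (hdiv : ∀ x : Γ', ∃ n : ℕ, 1 ≤ n ∧ n • x ∈ H) :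
    ∃ e : {Δ' : AddSubgroup Γ' // ∀ a ∈ Δ', ∀ b : Γ', 0 ≤ b → b ≤ a → b ∈ Δ'} ≃
          {Δ : AddSubgroup Γ' // Δ ≤ H ∧ ∀ a ∈ Δ, ∀ b ∈ H, 0 ≤ b → b ≤ a → b ∈ Δ},
      (∀ Δ', (e Δ').1 = Δ'.1 ⊓ H) ∧
      (∀ Δ, ∀ x : Γ', x ∈ (e.symm Δ).1 ↔ ∃ n : ℕ, 1 ≤ n ∧ n • x ∈ Δ.1) := by
  -- convex subgroup membership from a positive multiple
  have key : ∀ (Δ' : AddSubgroup Γ'),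
      (∀ a ∈ Δ', ∀ b : Γ', 0 ≤ b → b ≤ a → b ∈ Δ') →
      ∀ (x : Γ') (n : ℕ), 1 ≤ n → n • x ∈ Δ' → x ∈ Δ' := by
    intro Δ' hconv x n hn hx
    rcases le_total 0 x with h0 | h0
    · exact hconv _ hx x h0 (le_nsmul_self' h0 hn)
    · have : -x ∈ Δ' := by
        refine hconv (n • (-x)) (by simpa using Δ'.neg_mem hx) (-x)
          (by simpa using h0) (le_nsmul_self' (by simpa using h0) hn)
      simpa using Δ'.neg_mem this
  refine ⟨{
    toFun := fun Δ' => ⟨Δ'.1 ⊓ H, inf_le_right, ?_⟩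
    invFun := fun Δ => ⟨sat Δ.1, ?_⟩
    left_inv := ?_
    right_inv := ?_ }, fun _ => rfl, fun Δ x => mem_sat⟩
  · -- convexity of Δ' ⊓ H within H
    rintro a ⟨haΔ, haH⟩ b hbH hb0 hba
    exact ⟨Δ'.2 a haΔ b hb0 hba, hbH⟩
  · -- convexity of sat Δ
    intro a ha b hb0 hba
    obtain ⟨n, hn, hna⟩ := ha
    obtain ⟨m, hm, hmH⟩ := hdiv (n • b)
    refine ⟨n * m, Nat.one_le_iff_ne_zero.2 (by positivity), ?_⟩
    rw [mul_nsmul]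
    refine Δ.2.2 ((n * m) • a) ?_ _ hmH
      (nsmul_nonneg (nsmul_nonneg hb0 n) m) ?_
    · rw [mul_nsmul]; exact Δ.1.nsmul_mem hna m
    · rw [mul_nsmul]
      exact nsmul_le_nsmul_right (nsmul_le_nsmul_right hba n) m
  · -- left inverse
    intro Δ'
    ext x
    simp only [mem_sat, AddSubgroup.mem_inf]
    constructor
    · rintro ⟨n, hn, hx, _⟩
      exact key Δ'.1 Δ'.2 x n hn hx
    · intro hx
      obtain ⟨n, hn, hnH⟩ := hdiv x
      exact ⟨n, hn, Δ'.1.nsmul_mem hx n, hnH⟩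
  · -- right inverse
    intro Δ
    ext x
    simp only [AddSubgroup.mem_inf, mem_sat]
    constructor
    · rintro ⟨⟨n, hn, hnx⟩, hxH⟩
      rcases le_total 0 x with h0 | h0
      · exact Δ.2.2 _ hnx x hxH h0 (le_nsmul_self' h0 hn)
      · have : -x ∈ Δ.1 :=
          Δ.2.2 (n • (-x)) (by simpa using Δ.1.neg_mem hnx) (-x) (H.neg_mem hxH)
            (by simpa using h0) (le_nsmul_self' (by simpa using h0) hn)
        simpa using Δ.1.neg_mem this
    · intro hx
      exact ⟨⟨1, le_refl 1, by simpa using hx⟩, Δ.2.1 hx⟩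

end ValPaper
end

section
/- Let J be a nonzero O-submodule of K and let S = {x ∈ K^× | x•J = J}. Then S is a subgroup of K^× containing the group O^× of units of O, v(S) is a convex subgroup of Γ, and S = {x ∈ K^× | v(x) ∈ v(S)}. -/
namespace ValPaper

variable {K : Type*} [Field K] {Γ : Type*} [AddCommGroup Γ] [LinearOrder Γ] [IsOrderedAddMonoid Γ]

section Helpers

variable (v : AddValuation K (WithTop Γ))

lemma smul_mem_of_nonneg (J : Submodule ↥(O v) K) {x : K} (hx : 0 ≤ v x)
    {j : K} (hj : j ∈ J) : x * j ∈ J :=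
  J.smul_mem (⟨x, hx⟩ : ↥(O v)) hj

lemma image_eq_iff (J : Submodule ↥(O v) K) {x : K} (hx : x ≠ 0) :
    (fun t => x * t) '' (J : Set K) = (J : Set K) ↔
      (∀ j ∈ J, x * j ∈ J) ∧ (∀ j ∈ J, x⁻¹ * j ∈ J) := by
  constructor
  · intro h
    refine ⟨fun j hj => ?_, fun j hj => ?_⟩
    · have : x * j ∈ (fun t => x * t) '' (J : Set K) := ⟨j, hj, rfl⟩
      rwa [h] at this
    · have hj' : j ∈ (fun t => x * t) '' (J : Set K) := by rw [h]; exact hj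
      obtain ⟨t, ht, rfl⟩ := hj'
      show x⁻¹ * (x * t) ∈ J
      rwa [← mul_assoc, inv_mul_cancel₀ hx, one_mul]
  · rintro ⟨h1, h2⟩
    ext j
    constructor
    · rintro ⟨t, ht, rfl⟩; exact h1 t ht
    · intro hj
      exact ⟨x⁻¹ * j, h2 j hj, by
        show x * (x⁻¹ * j) = j
        rw [← mul_assoc, mul_inv_cancel₀ hx, one_mul]⟩

end Helpers

/-- for a nonzero `O`-submodule `J` of `K`, the stabilizer
`S = {x ∈ K^× | x•J = J}` is a subgroup of `K^×` containing `O^×`, its image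
`v(S)` is a convex subgroup of `Γ`, and `S = {x ∈ K^× | v(x) ∈ v(S)}`. -/
theorem stabilizer_of_submodule (v : AddValuation K (WithTop Γ))
    (hv : Function.Surjective v)
    (J : Submodule ↥(O v) K) (hJ : J ≠ ⊥)
    (S : Set K)
    (hS : S = {x : K | x ≠ 0 ∧ (fun t => x * t) '' (J : Set K) = (J : Set K)})
    (vS : Set Γ) (hvS : vS = {γ : Γ | ∃ x ∈ S, v x = (γ : WithTop Γ)}) :
    ((1 : K) ∈ S ∧ (∀ x ∈ S, ∀ y ∈ S, x * y ∈ S) ∧ (∀ x ∈ S, x⁻¹ ∈ S) ∧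
      (∀ x : K, v x = ((0 : Γ) : WithTop Γ) → x ∈ S)) ∧
    (∃ Δ : AddSubgroup Γ, (Δ : Set Γ) = vS ∧ ∀ a ∈ Δ, ∀ b : Γ, 0 ≤ b → b ≤ a → b ∈ Δ) ∧
    S = {x : K | x ≠ 0 ∧ ∃ γ ∈ vS, v x = (γ : WithTop Γ)} := by
  subst hS hvS
  -- characterization of membership in S
  have hchar : ∀ x : K, x ≠ 0 →
      (x ∈ {x : K | x ≠ 0 ∧ (fun t => x * t) '' (J : Set K) = (J : Set K)} ↔
        (∀ j ∈ J, x * j ∈ J) ∧ (∀ j ∈ J, x⁻¹ * j ∈ J)) := by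
    intro x hx
    rw [Set.mem_setOf_eq, and_iff_right hx, image_eq_iff v J hx]
  -- units are in S
  have hunit : ∀ x : K, v x = ((0 : Γ) : WithTop Γ) →
      x ∈ {x : K | x ≠ 0 ∧ (fun t => x * t) '' (J : Set K) = (J : Set K)} := by
    intro x hvx
    have hx : x ≠ 0 := by
      intro h
      rw [h, v.map_zero] at hvx
      exact (WithTop.coe_ne_top (a := (0 : Γ))) hvx.symm
    rw [hchar x hx]
    have h1 : (0 : WithTop Γ) ≤ v x := by rw [hvx]; exact_mod_cast le_refl (0 : Γ)
    have h2 : (0 : WithTop Γ) ≤ v x⁻¹ := by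
      rw [v.map_inv, hvx]
      simp
    exact ⟨fun j hj => smul_mem_of_nonneg v J h1 hj, fun j hj => smul_mem_of_nonneg v J h2 hj⟩
  -- S is multiplicative
  have hmul : ∀ x ∈ {x : K | x ≠ 0 ∧ (fun t => x * t) '' (J : Set K) = (J : Set K)},
      ∀ y ∈ {x : K | x ≠ 0 ∧ (fun t => x * t) '' (J : Set K) = (J : Set K)},
      x * y ∈ {x : K | x ≠ 0 ∧ (fun t => x * t) '' (J : Set K) = (J : Set K)} := by
    intro x hx y hy
    have hx' := (hchar x hx.1).1 hx
    have hy' := (hchar y hy.1).1 hy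
    rw [hchar _ (mul_ne_zero hx.1 hy.1)]
    constructor
    · intro j hj
      rw [mul_assoc]
      exact hx'.1 _ (hy'.1 j hj)
    · intro j hj
      rw [mul_inv_rev, mul_assoc]
      exact hy'.2 _ (hx'.2 j hj)
  -- S is closed under inverses
  have hinv : ∀ x ∈ {x : K | x ≠ 0 ∧ (fun t => x * t) '' (J : Set K) = (J : Set K)},
      x⁻¹ ∈ {x : K | x ≠ 0 ∧ (fun t => x * t) '' (J : Set K) = (J : Set K)} := by
    intro x hx
    have hx' := (hchar x hx.1).1 hx
    rw [hchar _ (inv_ne_zero hx.1)]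
    rw [inv_inv]
    exact ⟨hx'.2, hx'.1⟩
  -- scaling lemma: same valuation as a member implies membership
  have hscale : ∀ x ∈ {x : K | x ≠ 0 ∧ (fun t => x * t) '' (J : Set K) = (J : Set K)},
      ∀ y : K, y ≠ 0 → v y = v x →
      y ∈ {x : K | x ≠ 0 ∧ (fun t => x * t) '' (J : Set K) = (J : Set K)} := by
    intro x hx y hy0 hvy
    have hvu : v (y * x⁻¹) = ((0 : Γ) : WithTop Γ) := by
      obtain ⟨a, ha⟩ := WithTop.ne_top_iff_exists.mp (v.ne_top_iff.mpr hx.1)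
      rw [v.map_mul, v.map_inv, hvy, ← ha, ← WithTop.LinearOrderedAddCommGroup.coe_neg,
        ← WithTop.coe_add, add_neg_cancel]
    have := hmul _ (hunit _ hvu) _ hx
    rwa [mul_assoc, inv_mul_cancel₀ hx.1, mul_one] at this
  -- convexity core
  have hconv : ∀ x ∈ {x : K | x ≠ 0 ∧ (fun t => x * t) '' (J : Set K) = (J : Set K)},
      ∀ y : K, y ≠ 0 → 0 ≤ v y → v y ≤ v x →
      y ∈ {x : K | x ≠ 0 ∧ (fun t => x * t) '' (J : Set K) = (J : Set K)} := by
    intro x hx y hy0 hb hba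
    have hx' := (hchar x hx.1).1 hx
    rw [hchar y hy0]
    refine ⟨fun j hj => smul_mem_of_nonneg v J hb hj, fun j hj => ?_⟩
    have hnn : (0 : WithTop Γ) ≤ v (y⁻¹ * x) := by
      rw [v.map_mul, v.map_inv]
      obtain ⟨a, ha⟩ := WithTop.ne_top_iff_exists.mp (v.ne_top_iff.mpr hx.1)
      obtain ⟨b, hbb⟩ := WithTop.ne_top_iff_exists.mp (v.ne_top_iff.mpr hy0)
      rw [← ha, ← hbb, ← WithTop.LinearOrderedAddCommGroup.coe_neg, ← WithTop.coe_add]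
      rw [← ha, ← hbb] at hba
      have hle : b ≤ a := by exact_mod_cast hba
      exact_mod_cast (by rw [neg_add_eq_sub]; exact sub_nonneg.mpr hle : (0 : Γ) ≤ -b + a)
    have heq : y⁻¹ * j = (y⁻¹ * x) * (x⁻¹ * j) := by
      rw [mul_assoc, ← mul_assoc x, mul_inv_cancel₀ hx.1, one_mul]
    rw [heq]
    exact smul_mem_of_nonneg v J hnn (hx'.2 j hj)
  have hone : (1 : K) ∈ {x : K | x ≠ 0 ∧ (fun t => x * t) '' (J : Set K) = (J : Set K)} :=
    hunit 1 (by rw [v.map_one]; exact WithTop.coe_zero.symm)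
  refine ⟨⟨hone, hmul, hinv, hunit⟩, ?_, ?_⟩
  · refine ⟨{
      carrier := {γ : Γ | ∃ x ∈ {x : K | x ≠ 0 ∧ (fun t => x * t) '' (J : Set K) = (J : Set K)},
        v x = (γ : WithTop Γ)}
      zero_mem' := ⟨1, hone, by rw [v.map_one]; exact WithTop.coe_zero.symm⟩
      add_mem' := ?_
      neg_mem' := ?_ }, rfl, ?_⟩
    · rintro a b ⟨x, hx, hvx⟩ ⟨y, hy, hvy⟩
      exact ⟨x * y, hmul x hx y hy, by rw [v.map_mul, hvx, hvy, WithTop.coe_add]⟩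
    · rintro a ⟨x, hx, hvx⟩
      exact ⟨x⁻¹, hinv x hx, by rw [v.map_inv, hvx, WithTop.LinearOrderedAddCommGroup.coe_neg]⟩
    · rintro a ⟨x, hx, hvx⟩ b hb0 hba
      obtain ⟨y, hy⟩ := hv ((b : Γ) : WithTop Γ)
      have hy0 : y ≠ 0 := by
        intro h
        rw [h, v.map_zero] at hy
        exact (WithTop.coe_ne_top (a := b)) hy.symm
      refine ⟨y, hconv x hx y hy0 ?_ ?_, hy⟩
      · rw [hy]; exact_mod_cast hb0
      · rw [hy, hvx]; exact_mod_cast hba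
  · ext x
    simp only [Set.mem_setOf_eq]
    constructor
    · intro hx
      obtain ⟨γ, hγ⟩ := WithTop.ne_top_iff_exists.mp (v.ne_top_iff.mpr hx.1)
      exact ⟨hx.1, γ, ⟨x, hx, hγ.symm⟩, hγ.symm⟩
    · rintro ⟨hx0, γ, ⟨y, hy, hvy⟩, hvx⟩
      exact hscale y hy x hx0 (by rw [hvx, hvy])


end ValPaper
end

section
/- Let n ≥ 1, let A be an invertible upper-triangular n×n matrix over K with columns a_0, …, a_{n−1}, let I_0, …, I_{n−1} be O-submodules of K, let R = Σ_{i<n} I_i•a_i ⊆ K^n, and let π : K^n → K^{n−1} be the projection forgetting the first coordinate. Then the sequence of k-vector spaces 0 → (I_0•a_0)/m(I_0•a_0) → R/mR → π(R)/m·π(R) → 0, with the first map induced by the inclusion I_0•a_0 ⊆ R and the second induced by π, is exact. -/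
namespace ValPaper

variable {K : Type*} [Field K] {Γ : Type*} [AddCommGroup Γ] [LinearOrder Γ] [IsOrderedAddMonoid Γ]

section Helper

variable {R M N : Type*} [CommRing R] [AddCommGroup M] [Module R M]
  [AddCommGroup N] [Module R N] (I : Ideal R) (f : M →ₗ[R] N)

lemma qleAux : (I • ⊤ : Submodule R M) ≤ Submodule.comap f (I • ⊤ : Submodule R N) := by
  rw [← Submodule.map_le_iff_le_comap, Submodule.map_smul'', Submodule.map_top]
  exact Submodule.smul_mono le_rfl le_top

def qmapAux : (M ⧸ (I • ⊤ : Submodule R M)) →ₗ[R ⧸ I] (N ⧸ (I • ⊤ : Submodule R N)) where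
  toFun := Submodule.mapQ _ _ f (qleAux I f)
  map_add' := map_add _
  map_smul' := fun c y => by
    obtain ⟨c, rfl⟩ := Ideal.Quotient.mk_surjective c
    obtain ⟨y, rfl⟩ := Submodule.Quotient.mk_surjective _ y
    simp only [RingHom.id_apply]
    rw [Module.Quotient.mk_smul_mk, Submodule.mapQ_apply, Submodule.mapQ_apply, f.map_smul,
      ← Module.Quotient.mk_smul_mk]

lemma qmapAux_mk (x : M) :
    qmapAux I f (Submodule.Quotient.mk x) = Submodule.Quotient.mk (f x) := by
  show Submodule.mapQ _ _ f (qleAux I f) (Submodule.Quotient.mk x) = _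
  rw [Submodule.mapQ_apply]

end Helper

set_option maxHeartbeats 1000000 in
set_option synthInstance.maxHeartbeats 1000000 in
/-- for `R = Σ_{i<n} I_i•a_i` with `a_i` the columns of an invertible
upper-triangular matrix, the sequence of `k`-vector spaces
`0 → (I_0•a_0)/m(I_0•a_0) → R/mR → π(R)/m·π(R) → 0` is exact, where `π` forgets
the first coordinate. -/
theorem reduction_short_exact_sequence (v : AddValuation K (WithTop Γ))
    (hv : Function.Surjective v)
    (n : ℕ) (A : Matrix (Fin (n+1)) (Fin (n+1)) K)
    (htri : A.BlockTriangular id) (hA : IsUnit A)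
    (I : Fin (n+1) → Submodule ↥(O v) K)
    (R : Submodule ↥(O v) (Fin (n+1) → K))
    (hR : (R : Set (Fin (n+1) → K)) = {x : Fin (n+1) → K | ∃ t : Fin (n+1) → K,
      (∀ i, t i ∈ I i) ∧ x = ∑ i : Fin (n+1), t i • (fun j => A j i)})
    (S : Submodule ↥(O v) (Fin (n+1) → K))
    (hS : (S : Set (Fin (n+1) → K)) =
      {x : Fin (n+1) → K | ∃ t ∈ I 0, x = t • (fun j => A j 0)})
    (hle : S ≤ R) :
    ∃ (ι : (↥S ⧸ (mIdeal v • (⊤ : Submodule ↥(O v) ↥S))) →ₗ[↥(O v) ⧸ mIdeal v]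
          (↥R ⧸ (mIdeal v • (⊤ : Submodule ↥(O v) ↥R))))
      (p : (↥R ⧸ (mIdeal v • (⊤ : Submodule ↥(O v) ↥R))) →ₗ[↥(O v) ⧸ mIdeal v]
          (↥(R.map (LinearMap.funLeft ↥(O v) K Fin.succ)) ⧸
            (mIdeal v • (⊤ : Submodule ↥(O v)
              ↥(R.map (LinearMap.funLeft ↥(O v) K Fin.succ)))))),
      (∀ x : ↥S, ι (Submodule.Quotient.mk x)
          = Submodule.Quotient.mk (Submodule.inclusion hle x)) ∧
      (∀ x : ↥R, p (Submodule.Quotient.mk x)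
          = Submodule.Quotient.mk
              (⟨LinearMap.funLeft ↥(O v) K Fin.succ x.1,
                Submodule.mem_map_of_mem x.2⟩ :
                ↥(R.map (LinearMap.funLeft ↥(O v) K Fin.succ)))) ∧
      Function.Injective ι ∧
      LinearMap.range ι = LinearMap.ker p ∧
      Function.Surjective p := by
  classical
  set π := LinearMap.funLeft ↥(O v) K (Fin.succ : Fin n → Fin (n+1)) with hπdef
  set Φ : (Fin (n+1) → K) →ₗ[↥(O v)] (Fin (n+1) → K) :=
    (Matrix.mulVecLin A).restrictScalars ↥(O v) with hΦdef
  have hΦapp : ∀ t, Φ t = A.mulVec t := fun _ => rfl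
  set b : Fin (n+1) → K := fun j => A j 0 with hbdef
  -- basic sums
  have hsum : ∀ t : Fin (n+1) → K,
      (∑ i : Fin (n+1), t i • (fun j => A j i)) = Φ t := by
    intro t; funext j
    simp [hΦapp, Matrix.mulVec, dotProduct, mul_comm]
  have hsingle : ∀ (i : Fin (n+1)) (s : K), Φ (Pi.single i s) = s • (fun j => A j i) := by
    intro i s; funext j
    simp [hΦapp, Matrix.mulVec, dotProduct, Pi.single_apply, mul_comm]
  -- membership characterizations
  have hmemR_iff : ∀ x : Fin (n+1) → K, x ∈ R ↔ ∃ t, (∀ i, t i ∈ I i) ∧ x = Φ t := by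
    intro x
    rw [← SetLike.mem_coe, hR]
    simp only [Set.mem_setOf_eq, hsum]
  have hmemS_iff : ∀ x : Fin (n+1) → K, x ∈ S ↔ ∃ t ∈ I 0, x = t • b := by
    intro x
    rw [← SetLike.mem_coe, hS]
    rfl
  -- injectivity of Φ
  have hΦinj : Function.Injective Φ := by
    have h := Matrix.mulVec_injective_iff_isUnit.mpr hA
    intro x y hxy
    exact h (by rw [← hΦapp, ← hΦapp, hxy])
  -- the submatrix B
  have hdet : IsUnit A.det := (Matrix.isUnit_iff_isUnit_det A).mp hA
  have hdiag : ∀ i, A i i ≠ 0 := by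
    rw [Matrix.det_of_upperTriangular htri] at hdet
    intro i
    exact Finset.prod_ne_zero_iff.mp hdet.ne_zero i (Finset.mem_univ i)
  set B := A.submatrix (Fin.succ : Fin n → Fin (n+1)) Fin.succ with hBdef
  have htriB : B.BlockTriangular id := by
    intro i j h
    exact htri (show (id (Fin.succ j) : Fin (n+1)) < id (Fin.succ i) from
      Fin.succ_lt_succ_iff.mpr h)
  have hBunit : IsUnit B := by
    apply (Matrix.isUnit_iff_isUnit_det B).mpr
    rw [Matrix.det_of_upperTriangular htriB]
    exact isUnit_iff_ne_zero.mpr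
      (Finset.prod_ne_zero_iff.mpr fun i _ => hdiag i.succ)
  have hBinj : Function.Injective B.mulVec := Matrix.mulVec_injective_iff_isUnit.mpr hBunit
  -- π ∘ Φ
  have hπb : π b = 0 := by
    funext j
    show A j.succ 0 = 0
    exact htri (Fin.succ_pos j)
  have hcomp : ∀ t : Fin (n+1) → K, π (Φ t) = B.mulVec (fun i => t i.succ) := by
    intro t; funext j
    show (A.mulVec t) j.succ = _
    have h0 : A j.succ 0 = 0 := htri (Fin.succ_pos j)
    simp [Matrix.mulVec, dotProduct, Fin.sum_univ_succ, h0, hBdef]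
  -- membership helpers
  have hmemR : ∀ t, (∀ i, t i ∈ I i) → Φ t ∈ R := fun t ht =>
    (hmemR_iff _).mpr ⟨t, ht, rfl⟩
  have hsingle_mem : ∀ (i : Fin (n+1)) (s : K), s ∈ I i → Φ (Pi.single i s) ∈ R := by
    intro i s hs
    apply hmemR
    intro k
    rcases eq_or_ne k i with rfl | hk
    · simpa using hs
    · rw [Pi.single_eq_of_ne hk]
      exact (I k).zero_mem
  have hmemRm : ∀ t : Fin (n+1) → K, (∀ i, t i ∈ mIdeal v • I i) → Φ t ∈ mIdeal v • R := by
    intro t ht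
    have hdecomp : Φ t = ∑ i, Φ (Pi.single i (t i)) := by
      conv_lhs => rw [← Finset.univ_sum_single t]
      exact map_sum Φ _ _
    rw [hdecomp]
    refine Submodule.sum_mem _ (fun i _ => ?_)
    refine Submodule.smul_induction_on (ht i) ?_ ?_
    · intro c hc s hs
      have h1 : (Pi.single i (c • s) : Fin (n+1) → K) = c • (Pi.single i s : Fin (n+1) → K) := by
        funext k
        rcases eq_or_ne k i with rfl | hk
        · simp
        · simp [Pi.single_eq_of_ne hk]
      rw [h1, map_smul]
      exact Submodule.smul_mem_smul hc (hsingle_mem i s hs)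
    · intro x y hx hy
      have h1 : (Pi.single i (x + y) : Fin (n+1) → K) = (Pi.single i x : Fin (n+1) → K) + Pi.single i y := by
        funext k
        rcases eq_or_ne k i with rfl | hk
        · simp
        · simp [Pi.single_eq_of_ne hk]
      rw [h1, map_add]
      exact add_mem hx hy
  have hcoefm : ∀ x, x ∈ mIdeal v • R →
      ∃ u, (∀ i, u i ∈ mIdeal v • I i) ∧ x = Φ u := by
    intro x hx
    refine Submodule.smul_induction_on hx ?_ ?_
    · intro c hc r hr
      obtain ⟨t, ht, rfl⟩ := (hmemR_iff r).mp hr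
      exact ⟨c • t, fun i => Submodule.smul_mem_smul hc (ht i), (map_smul Φ c t).symm⟩
    · rintro x y ⟨u, hu, rfl⟩ ⟨w, hw, rfl⟩
      exact ⟨u + w, fun i => add_mem (hu i) (hw i), (map_add Φ u w).symm⟩
  have hcoefmΨ : ∀ z, z ∈ mIdeal v • (R.map π) →
      ∃ u, (∀ i, u i ∈ mIdeal v • I i) ∧ z = π (Φ u) := by
    intro z hz
    refine Submodule.smul_induction_on hz ?_ ?_
    · rintro c hc w ⟨r, hr, rfl⟩
      obtain ⟨t, ht, rfl⟩ := (hmemR_iff r).mp hr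
      refine ⟨c • t, fun i => Submodule.smul_mem_smul hc (ht i), ?_⟩
      rw [map_smul, map_smul]
    · rintro x y ⟨u, hu, rfl⟩ ⟨w, hw, rfl⟩
      exact ⟨u + w, fun i => add_mem (hu i) (hw i), by rw [map_add, map_add]⟩
  have hmemSm : ∀ s : K, s ∈ mIdeal v • I 0 → s • b ∈ mIdeal v • S := by
    intro s hs
    refine Submodule.smul_induction_on hs ?_ ?_
    · intro c hc y hy
      rw [smul_assoc]
      exact Submodule.smul_mem_smul hc ((hmemS_iff _).mpr ⟨y, hy, rfl⟩)
    · intro x y hx hy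
      rw [add_smul]
      exact add_mem hx hy
  -- the maps
  refine ⟨qmapAux (mIdeal v) (Submodule.inclusion hle),
    qmapAux (mIdeal v) (π.submoduleMap R), fun x => qmapAux_mk _ _ x, ?_, ?_, ?_, ?_⟩
  · intro x
    rw [qmapAux_mk]
    rfl
  · -- injectivity of ι
    intro x y hxy
    obtain ⟨x, rfl⟩ := Submodule.Quotient.mk_surjective _ x
    obtain ⟨y, rfl⟩ := Submodule.Quotient.mk_surjective _ y
    rw [qmapAux_mk, qmapAux_mk, Submodule.Quotient.eq] at hxy
    rw [Submodule.Quotient.eq]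
    rw [Submodule.mem_smul_top_iff] at hxy ⊢
    have hxy' : ((x : Fin (n+1) → K) - y) ∈ mIdeal v • R := by
      simpa using hxy
    obtain ⟨t, htI, hts⟩ := (hmemS_iff _).mp (sub_mem x.2 y.2)
    obtain ⟨u, hu, huts⟩ := hcoefm _ hxy'
    rw [hts] at huts
    have h1 : Φ (Pi.single 0 t) = Φ u := by rw [hsingle]; exact huts
    have h2 : t = u 0 := by
      have := congrFun (hΦinj h1) 0
      simpa using this
    show ((x - y : ↥S) : Fin (n+1) → K) ∈ mIdeal v • S
    rw [Submodule.coe_sub, hts]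
    exact hmemSm t (h2 ▸ hu 0)
  · -- range ι = ker p
    apply le_antisymm
    · rintro _ ⟨z, rfl⟩
      obtain ⟨s, rfl⟩ := Submodule.Quotient.mk_surjective _ z
      rw [LinearMap.mem_ker, qmapAux_mk, qmapAux_mk]
      have h0 : (π.submoduleMap R) (Submodule.inclusion hle s) = 0 := by
        apply Subtype.ext
        show π ((s : Fin (n+1) → K)) = 0
        obtain ⟨t, ht, hts⟩ := (hmemS_iff _).mp s.2
        have hsm : π (t • b) = t • π b := rfl
        rw [hts, hsm, hπb, smul_zero]
      rw [h0]
      exact Submodule.Quotient.mk_zero _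
    · intro z hz
      obtain ⟨x, rfl⟩ := Submodule.Quotient.mk_surjective _ z
      rw [LinearMap.mem_ker, qmapAux_mk, ← (Submodule.Quotient.mk_zero _),
        Submodule.Quotient.eq] at hz
      rw [sub_zero, Submodule.mem_smul_top_iff] at hz
      have hz' : π ((x : ↥R) : Fin (n+1) → K) ∈ mIdeal v • (R.map π) := hz
      obtain ⟨t, htI, hxt⟩ := (hmemR_iff _).mp x.2
      obtain ⟨u, hu, hzu⟩ := hcoefmΨ _ hz'
      rw [hxt] at hzu
      have hsucc : ∀ i : Fin n, t i.succ = u i.succ := by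
        rw [hcomp, hcomp] at hzu
        intro i
        exact congrFun (hBinj hzu) i
      have hrest : Φ (t - (Pi.single 0 (t 0) : Fin (n+1) → K)) ∈ mIdeal v • R := by
        apply hmemRm
        intro i
        induction i using Fin.cases with
        | zero => simp
        | succ j =>
          have : (t - (Pi.single 0 (t 0) : Fin (n+1) → K)) j.succ = t j.succ := by
            simp [Pi.sub_apply, Pi.single_eq_of_ne (Fin.succ_ne_zero j)]
          rw [this, hsucc j]
          exact hu j.succ
      have hs0 : (t 0) • b ∈ S := (hmemS_iff _).mpr ⟨t 0, htI 0, rfl⟩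
      refine ⟨Submodule.Quotient.mk ⟨(t 0) • b, hs0⟩, ?_⟩
      rw [qmapAux_mk, Submodule.Quotient.eq, Submodule.mem_smul_top_iff]
      have hcoe : ((Submodule.inclusion hle ⟨(t 0) • b, hs0⟩ - x : ↥R) : Fin (n+1) → K)
          = -(Φ (t - (Pi.single 0 (t 0) : Fin (n+1) → K))) := by
        rw [Submodule.coe_sub]
        show (t 0) • b - (x : Fin (n+1) → K) = _
        rw [hxt, map_sub, hsingle]
        abel
      rw [hcoe]
      exact neg_mem hrest
  · -- surjectivity of p
    intro z
    obtain ⟨w, rfl⟩ := Submodule.Quotient.mk_surjective _ z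
    obtain ⟨x, hx, hxw⟩ := w.2
    refine ⟨Submodule.Quotient.mk ⟨x, hx⟩, ?_⟩
    rw [qmapAux_mk]
    congr 1
    exact Subtype.ext hxw


end ValPaper
end
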